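/- arXiv:1909.04633 — 2 statements merged into one kernel-verified Lean document; each statement's English description precedes it below -/
import Mathlib

section
/- Let p∈(0,1), b>0, and κ = (b+p)/(b+1). Then (H_1^{(p)}(τ_n) − [(1−p)/(b+p)]·Y_1^{(p)}(τ_n)) / n^κ converges to 0 in L² as n→∞. -/
open MeasureTheory ProbabilityTheory Filter Topology
open scoped ENNReal NNReal

noncomputable section

/-- The number of vertices `|T(t)|` of the continuous-time tree at time `t`, given the
arrival times `τ n` of the vertices `n = 1, 2, …`. -/
def patCount {Ω : Type*} (τ : ℕ → Ω → ℝ) (t : ℝ) (ω : Ω) : ℕ :=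
  Set.ncard {n : ℕ | 1 ≤ n ∧ τ n ω ≤ t}

/-- The weight `b(dₙ(i) - 1) + 1` of vertex `i` in the preferential attachment tree with `n`
vertices (counting the half-edge at the root), where `π j` is the parent of vertex `j`:
it equals `1 + b · (number of children of i)`. -/
def patWeight {Ω : Type*} (b : ℝ) (π : ℕ → Ω → ℕ) (n i : ℕ) (ω : Ω) : ℝ :=
  1 + b * ((Finset.Icc 2 n).filter (fun j => π j ω = i)).card

/-- The σ-algebra generated by the attachment choices of the first `n` vertices. -/
def patHist {Ω : Type*} [MeasurableSpace Ω] (π : ℕ → Ω → ℕ) (n : ℕ) : MeasurableSpace Ω :=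
  MeasurableSpace.comap (fun ω => fun j : Fin n => π (j + 1) ω) inferInstance

/-- The continuous-time preferential attachment tree with reinforcement parameter `b`:
`τ n` is the arrival time of vertex `n` (`τ 1 = 0`), and for `n ≥ 2`, `π n ∈ {1,…,n-1}` is
the parent of vertex `n`.  Given `n` vertices, each vertex `i` carries an independent
exponential clock of rate `b(dₙ(i)-1)+1`; equivalently, the waiting time for the `(n+1)`st
vertex is exponential with rate `b(n-1)+n = (b+1)n - b`, the waiting times are independent
(and independent of the attachment choices), and vertex `n+1` attaches to `i` with
conditional probability `(b(dₙ(i)-1)+1)/((b+1)n-b)` given the past. -/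
structure IsContPAT {Ω : Type*} [MeasurableSpace Ω] (P : Measure Ω) (b : ℝ)
    (τ : ℕ → Ω → ℝ) (π : ℕ → Ω → ℕ) : Prop where
  meas_τ : ∀ n, Measurable (τ n)
  meas_π : ∀ n, Measurable (π n)
  τ_zero : ∀ ω, τ 0 ω = 0
  τ_one : ∀ ω, τ 1 ω = 0
  π_zero : ∀ ω, π 0 ω = 0
  π_one : ∀ ω, π 1 ω = 0
  τ_mono : ∀ n, 1 ≤ n → ∀ ω, τ n ω < τ (n + 1) ω
  /-- the waiting time between the arrival of the `n`th and the `(n+1)`st vertex is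
  exponential with rate `b(n-1)+n = (b+1)n-b` -/
  wait_law : ∀ n : ℕ, 1 ≤ n →
    P.map (fun ω => τ (n + 1) ω - τ n ω) = expMeasure ((b + 1) * n - b)
  /-- the waiting times are independent -/
  waits_iIndep : iIndepFun
    (fun n : ℕ => fun ω => τ (n + 2) ω - τ (n + 1) ω) P
  /-- the waiting times are independent of the attachment choices -/
  waits_indep_π : IndepFun (fun ω => fun n : ℕ => τ (n + 2) ω - τ (n + 1) ω)
    (fun ω => fun n : ℕ => π n ω) P
  π_range : ∀ n, 2 ≤ n → ∀ ω, 1 ≤ π n ω ∧ π n ω ≤ n - 1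
  /-- vertex `n+1` attaches to vertex `i` with probability proportional to the weight of `i` -/
  cond_π : ∀ n, 1 ≤ n → ∀ i, 1 ≤ i → i ≤ n →
    (P[(fun ω => if π (n + 1) ω = i then (1 : ℝ) else 0) | patHist π n])
      =ᵐ[P] fun ω => patWeight b π n i ω / ((b + 1) * n - b)

/-- Follow the parent map from `j` along intact edges to the root of the percolation cluster
containing `j` (`cut j = 1` means that the edge connecting `j` to its parent is cut);
the first argument is a recursion fuel. -/
def clusterRootAux {Ω : Type*} (π : ℕ → Ω → ℕ) (cut : ℕ → Ω → ℕ) (ω : Ω) :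
    ℕ → ℕ → ℕ
  | 0, j => j
  | fuel + 1, j =>
      if j ≤ 1 then 1 else if cut j ω = 1 then j else clusterRootAux π cut ω fuel (π j ω)

/-- The root of the percolation cluster containing vertex `j`. -/
def clusterRoot {Ω : Type*} (π : ℕ → Ω → ℕ) (cut : ℕ → Ω → ℕ) (j : ℕ) (ω : Ω) : ℕ :=
  clusterRootAux π cut ω j j

/-- The root of the `i`-th percolation cluster (`i ≥ 1`), in increasing order of birth
times / root labels: cluster `1` is rooted at the root `1` of the tree, and the roots of the
later clusters are the successive vertices whose parent edge is cut. -/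
def clusterRootSeq {Ω : Type*} (cut : ℕ → Ω → ℕ) : ℕ → Ω → ℕ
  | 0, _ => 0
  | 1, _ => 1
  | i + 2, ω => sInf {j : ℕ | clusterRootSeq cut (i + 1) ω < j ∧ cut j ω = 1}

/-- `|T^{(p)}_i(t)|`: the number of vertices, at time `t`, of the `i`-th percolation cluster
(equal to `0` before the birth time of the cluster). -/
def clusterSize {Ω : Type*} (τ : ℕ → Ω → ℝ) (π : ℕ → Ω → ℕ) (cut : ℕ → Ω → ℕ)
    (i : ℕ) (t : ℝ) (ω : Ω) : ℕ :=
  Set.ncard {j : ℕ | 1 ≤ j ∧ τ j ω ≤ t ∧ clusterRoot π cut j ω = clusterRootSeq cut i ω}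

/-- `b_i`: the birth time of the `i`-th percolation cluster. -/
def clusterBirth {Ω : Type*} (τ : ℕ → Ω → ℝ) (cut : ℕ → Ω → ℕ) (i : ℕ) (ω : Ω) : ℝ :=
  τ (clusterRootSeq cut i ω) ω

/-- `H^{(p)}_i(t)`: the number of half-edges attached to the vertices of the `i`-th
percolation cluster at time `t`: one at its root (from its birth on) and one for every cut
edge whose parent endpoint belongs to the cluster. -/
def clusterHalfEdges {Ω : Type*} (τ : ℕ → Ω → ℝ) (π : ℕ → Ω → ℕ) (cut : ℕ → Ω → ℕ)
    (i : ℕ) (t : ℝ) (ω : Ω) : ℕ :=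
  (if τ (clusterRootSeq cut i ω) ω ≤ t then 1 else 0) +
    Set.ncard {j : ℕ | 2 ≤ j ∧ τ j ω ≤ t ∧ cut j ω = 1 ∧
      clusterRoot π cut (π j ω) ω = clusterRootSeq cut i ω}

/-- `Y_i^{(p)}(t) = (b(|T_i^{(p)}(t)| - 2 + H_i^{(p)}(t)) + |T_i^{(p)}(t)|) 1_{b_i ≤ t}`. -/
def clusterY {Ω : Type*} (b : ℝ) (τ : ℕ → Ω → ℝ) (π : ℕ → Ω → ℕ) (cut : ℕ → Ω → ℕ)
    (i : ℕ) (t : ℝ) (ω : Ω) : ℝ :=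
  if clusterBirth τ cut i ω ≤ t then
    b * ((clusterSize τ π cut i t ω : ℝ) - 2 + clusterHalfEdges τ π cut i t ω)
      + clusterSize τ π cut i t ω
  else 0

/-- The continuous-time preferential attachment tree with superposed Bernoulli bond
percolation: on top of `IsContPAT`, each vertex `n ≥ 2` carries an independent indicator
`cut n` which equals `1` (the edge connecting `n` to its parent is cut at its midpoint) with
probability `1-p` and `0` (the edge is kept intact) with probability `p`, independently of
the tree growth. -/
structure IsContPATPerc {Ω : Type*} [MeasurableSpace Ω] (P : Measure Ω) (b p : ℝ)
    (τ : ℕ → Ω → ℝ) (π : ℕ → Ω → ℕ) (cut : ℕ → Ω → ℕ) : Prop where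
  toPAT : IsContPAT P b τ π
  meas_cut : ∀ n, Measurable (cut n)
  cut_zero : ∀ ω, cut 0 ω = 0
  cut_one : ∀ ω, cut 1 ω = 0
  cut_law : ∀ n, 2 ≤ n → P.map (cut n)
      = ENNReal.ofReal (1 - p) • Measure.dirac (1 : ℕ)
        + ENNReal.ofReal p • Measure.dirac (0 : ℕ)
  cut_iIndep : iIndepFun (fun n : ℕ => fun ω => cut (n + 2) ω) P
  cut_indep_tree : IndepFun (fun ω => fun n : ℕ => cut n ω)
      (fun ω => ((fun n : ℕ => τ n ω), (fun n : ℕ => π n ω))) P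


/-! ### Auxiliary discrete-time quantities and pathwise lemmas -/

section AuxPathwise

variable {Ω : Type*} (π cut : ℕ → Ω → ℕ)

/-- Discrete-time size of the root cluster after `n` vertices. -/
def pSd (n : ℕ) (ω : Ω) : ℕ :=
  ((Finset.Icc 1 n).filter (fun j => clusterRoot π cut j ω = 1)).card

/-- Discrete-time number of half-edges of the root cluster after `n` vertices. -/
def pHd (n : ℕ) (ω : Ω) : ℕ :=
  1 + ((Finset.Icc 2 n).filter
      (fun j => cut j ω = 1 ∧ clusterRoot π cut (π j ω) ω = 1)).card

/-- Discrete-time `Y` of the root cluster after `n` vertices. -/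
def pYd (b : ℝ) (n : ℕ) (ω : Ω) : ℝ :=
  b * ((pSd π cut n ω : ℝ) - 2 + (pHd π cut n ω : ℝ)) + (pSd π cut n ω : ℝ)

lemma pYd_def (b : ℝ) (n : ℕ) (ω : Ω) : pYd π cut b n ω
    = b * ((pSd π cut n ω : ℝ) - 2 + (pHd π cut n ω : ℝ)) + (pSd π cut n ω : ℝ) := rfl

variable {π cut}

lemma clusterRootAux_stab (hr : ∀ k, 2 ≤ k → ∀ ω, 1 ≤ π k ω ∧ π k ω ≤ k - 1) (ω : Ω) :
    ∀ j, 1 ≤ j → ∀ f1 f2, j ≤ f1 → j ≤ f2 →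
      clusterRootAux π cut ω f1 j = clusterRootAux π cut ω f2 j := by
  intro j
  induction j using Nat.strong_induction_on with
  | _ j ih =>
    intro hj f1 f2 h1 h2
    obtain ⟨a, rfl⟩ : ∃ a, f1 = a + 1 := ⟨f1 - 1, by omega⟩
    obtain ⟨c, rfl⟩ : ∃ c, f2 = c + 1 := ⟨f2 - 1, by omega⟩
    by_cases hj1 : j ≤ 1
    · simp [clusterRootAux, hj1]
    · simp only [clusterRootAux, if_neg hj1]
      by_cases hc : cut j ω = 1
      · simp [hc]
      · simp only [if_neg hc]
        have hrj := hr j (by omega) ω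
        exact ih (π j ω) (by omega) hrj.1 a c (by omega) (by omega)

lemma clusterRootAux_eq (hr : ∀ k, 2 ≤ k → ∀ ω, 1 ≤ π k ω ∧ π k ω ≤ k - 1) (ω : Ω)
    {j f : ℕ} (hj : 1 ≤ j) (hf : j ≤ f) :
    clusterRootAux π cut ω f j = clusterRoot π cut j ω :=
  clusterRootAux_stab hr ω j hj f j hf le_rfl

lemma clusterRoot_one (ω : Ω) : clusterRoot π cut 1 ω = 1 := by
  simp [clusterRoot, clusterRootAux]

lemma clusterRoot_succ (hr : ∀ k, 2 ≤ k → ∀ ω, 1 ≤ π k ω ∧ π k ω ≤ k - 1) (ω : Ω)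
    {n : ℕ} (hn : 1 ≤ n) :
    clusterRoot π cut (n + 1) ω
      = if cut (n + 1) ω = 1 then n + 1 else clusterRoot π cut (π (n + 1) ω) ω := by
  have hrn := hr (n + 1) (by omega) ω
  show clusterRootAux π cut ω (n + 1) (n + 1) = _
  rw [clusterRootAux, if_neg (by omega)]
  by_cases hc : cut (n + 1) ω = 1
  · simp [hc]
  · simp only [if_neg hc]
    exact clusterRootAux_eq hr ω hrn.1 (by omega)

lemma clusterRoot_succ_eq_one_iff (hr : ∀ k, 2 ≤ k → ∀ ω, 1 ≤ π k ω ∧ π k ω ≤ k - 1)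
    (ω : Ω) {n : ℕ} (hn : 1 ≤ n) :
    clusterRoot π cut (n + 1) ω = 1
      ↔ (¬ cut (n + 1) ω = 1 ∧ clusterRoot π cut (π (n + 1) ω) ω = 1) := by
  rw [clusterRoot_succ hr ω hn]
  by_cases hc : cut (n + 1) ω = 1 <;> simp [hc]; omega

lemma pSd_one (ω : Ω) : pSd π cut 1 ω = 1 := by
  simp [pSd, Finset.Icc_self, Finset.filter_singleton, clusterRoot_one]

lemma pHd_one (ω : Ω) : pHd π cut 1 ω = 1 := by
  simp [pHd]

lemma pYd_one (b : ℝ) (ω : Ω) : pYd π cut b 1 ω = 1 := by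
  rw [pYd_def, pSd_one, pHd_one]; push_cast; ring

lemma Icc_one_succ (n : ℕ) (hn : 1 ≤ n) :
    Finset.Icc 1 (n + 1) = insert (n + 1) (Finset.Icc 1 n) := by
  ext j; simp [Finset.mem_Icc, Finset.mem_insert]; omega

lemma Icc_two_succ (n : ℕ) (hn : 1 ≤ n) :
    Finset.Icc 2 (n + 1) = insert (n + 1) (Finset.Icc 2 n) := by
  ext j; simp [Finset.mem_Icc, Finset.mem_insert]; omega

lemma pSd_succ (hr : ∀ k, 2 ≤ k → ∀ ω, 1 ≤ π k ω ∧ π k ω ≤ k - 1) (ω : Ω)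
    {n : ℕ} (hn : 1 ≤ n) :
    pSd π cut (n + 1) ω = pSd π cut n ω
      + (if ¬ cut (n + 1) ω = 1 ∧ clusterRoot π cut (π (n + 1) ω) ω = 1 then 1 else 0) := by
  unfold pSd
  rw [Icc_one_succ n hn, Finset.filter_insert]
  by_cases h : clusterRoot π cut (n + 1) ω = 1
  · rw [if_pos h, Finset.card_insert_of_notMem (by simp [Finset.mem_Icc] <;> omega)]
    rw [if_pos ((clusterRoot_succ_eq_one_iff hr ω hn).mp h)]
  · rw [if_neg h, if_neg (fun hc => h ((clusterRoot_succ_eq_one_iff hr ω hn).mpr hc))]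
    omega

lemma pHd_succ (hr : ∀ k, 2 ≤ k → ∀ ω, 1 ≤ π k ω ∧ π k ω ≤ k - 1) (ω : Ω)
    {n : ℕ} (hn : 1 ≤ n) :
    pHd π cut (n + 1) ω = pHd π cut n ω
      + (if cut (n + 1) ω = 1 ∧ clusterRoot π cut (π (n + 1) ω) ω = 1 then 1 else 0) := by
  unfold pHd
  rw [Icc_two_succ n hn, Finset.filter_insert]
  by_cases h : cut (n + 1) ω = 1 ∧ clusterRoot π cut (π (n + 1) ω) ω = 1
  · rw [if_pos h, Finset.card_insert_of_notMem (by simp [Finset.mem_Icc] <;> omega), if_pos h]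
    omega
  · rw [if_neg h, if_neg h]
    omega

lemma pSd_pos (ω : Ω) {n : ℕ} (hn : 1 ≤ n) : 1 ≤ pSd π cut n ω := by
  have : (1 : ℕ) ∈ (Finset.Icc 1 n).filter (fun j => clusterRoot π cut j ω = 1) := by
    simp [Finset.mem_Icc, clusterRoot_one, hn]
  exact Finset.card_pos.mpr ⟨1, this⟩

lemma pSd_le (ω : Ω) (n : ℕ) : pSd π cut n ω ≤ n := by
  calc pSd π cut n ω ≤ (Finset.Icc 1 n).card := Finset.card_filter_le _ _
  _ = n := by rw [Nat.card_Icc]; omega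

lemma pHd_le (ω : Ω) {n : ℕ} (hn : 1 ≤ n) : pHd π cut n ω ≤ n := by
  have : ((Finset.Icc 2 n).filter
      (fun j => cut j ω = 1 ∧ clusterRoot π cut (π j ω) ω = 1)).card ≤ n - 1 := by
    calc _ ≤ (Finset.Icc 2 n).card := Finset.card_filter_le _ _
    _ = n - 1 := by rw [Nat.card_Icc]; omega
  unfold pHd; omega

end AuxPathwise


section AuxWeights

variable {Ω : Type*} {π cut : ℕ → Ω → ℕ}

/-- The number of vertices among `2..n` whose parent belongs to the root cluster:
they are the non-root vertices of the cluster plus the cut half-edges. -/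
lemma card_children_cluster (hr : ∀ k, 2 ≤ k → ∀ ω, 1 ≤ π k ω ∧ π k ω ≤ k - 1)
    (ω : Ω) {n : ℕ} (hn : 1 ≤ n) :
    ((Finset.Icc 2 n).filter (fun j => clusterRoot π cut (π j ω) ω = 1)).card
      = (pSd π cut n ω - 1) + (pHd π cut n ω - 1) := by
  classical
  set B := Finset.Icc 2 n with hB
  have hsplit : ((B.filter (fun j => clusterRoot π cut (π j ω) ω = 1)).filter
        (fun j => cut j ω = 1)).card
      + ((B.filter (fun j => clusterRoot π cut (π j ω) ω = 1)).filter
        (fun j => ¬ cut j ω = 1)).card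
      = (B.filter (fun j => clusterRoot π cut (π j ω) ω = 1)).card :=
    Finset.card_filter_add_card_filter_not (p := fun j => cut j ω = 1)
  have h1 : (B.filter (fun j => clusterRoot π cut (π j ω) ω = 1)).filter
        (fun j => cut j ω = 1)
      = B.filter (fun j => cut j ω = 1 ∧ clusterRoot π cut (π j ω) ω = 1) := by
    rw [Finset.filter_filter]
    exact Finset.filter_congr (fun j _ => by tauto)
  have h2 : (B.filter (fun j => clusterRoot π cut (π j ω) ω = 1)).filter
        (fun j => ¬ cut j ω = 1)
      = B.filter (fun j => clusterRoot π cut j ω = 1) := by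
    rw [Finset.filter_filter]
    apply Finset.filter_congr
    intro j hj
    simp only [hB, Finset.mem_Icc] at hj
    obtain ⟨m, rfl⟩ : ∃ m, j = m + 1 := ⟨j - 1, by omega⟩
    rw [clusterRoot_succ_eq_one_iff hr ω (by omega)]
    tauto
  have h3 : pSd π cut n ω
      = 1 + (B.filter (fun j => clusterRoot π cut j ω = 1)).card := by
    unfold pSd
    have : Finset.Icc 1 n = insert 1 B := by
      ext j; simp [hB, Finset.mem_Icc]; omega
    rw [this, Finset.filter_insert, if_pos (clusterRoot_one ω),
      Finset.card_insert_of_notMem (by simp [hB, Finset.mem_Icc])]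
    omega
  have h4 : pHd π cut n ω = 1 + (B.filter
      (fun j => cut j ω = 1 ∧ clusterRoot π cut (π j ω) ω = 1)).card := rfl
  rw [h1, h2] at hsplit
  omega

lemma sum_weights (b : ℝ) (hr : ∀ k, 2 ≤ k → ∀ ω, 1 ≤ π k ω ∧ π k ω ≤ k - 1)
    (ω : Ω) {n : ℕ} (hn : 1 ≤ n) :
    ∑ i ∈ Finset.Icc 1 n,
        (if clusterRoot π cut i ω = 1 then patWeight b π n i ω else 0)
      = pYd π cut b n ω := by
  classical
  rw [← Finset.sum_filter]
  set F := (Finset.Icc 1 n).filter (fun i => clusterRoot π cut i ω = 1) with hF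
  have hfib : ((Finset.Icc 2 n).filter
        (fun j => clusterRoot π cut (π j ω) ω = 1)).card
      = ∑ i ∈ F, (((Finset.Icc 2 n).filter
          (fun j => clusterRoot π cut (π j ω) ω = 1)).filter (fun j => π j ω = i)).card := by
    apply Finset.card_eq_sum_card_fiberwise
    intro j hj
    simp only [Finset.mem_coe, Finset.mem_filter, Finset.mem_Icc] at hj
    have := hr j (by omega) ω
    simp only [Finset.mem_coe, hF, Finset.mem_filter, Finset.mem_Icc]
    exact ⟨⟨this.1, by omega⟩, hj.2⟩
  have hfib2 : ∀ i ∈ F, (((Finset.Icc 2 n).filter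
        (fun j => clusterRoot π cut (π j ω) ω = 1)).filter (fun j => π j ω = i)).card
      = ((Finset.Icc 2 n).filter (fun j => π j ω = i)).card := by
    intro i hi
    simp only [hF, Finset.mem_filter] at hi
    congr 1
    rw [Finset.filter_filter]
    apply Finset.filter_congr
    intro j _
    constructor
    · tauto
    · intro h; exact ⟨h.symm ▸ hi.2, h⟩
  have hcard : ∑ i ∈ F, ((Finset.Icc 2 n).filter (fun j => π j ω = i)).card
      = (pSd π cut n ω - 1) + (pHd π cut n ω - 1) := by
    rw [← Finset.sum_congr rfl hfib2, ← hfib, card_children_cluster hr ω hn]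
  have hsum : ∑ i ∈ F, patWeight b π n i ω
      = (F.card : ℝ) + b * ((pSd π cut n ω - 1) + (pHd π cut n ω - 1) : ℕ) := by
    unfold patWeight
    rw [Finset.sum_add_distrib, Finset.sum_const, ← Finset.mul_sum, ← Nat.cast_sum, hcard]
    simp
  have hFS : F.card = pSd π cut n ω := rfl
  rw [hsum, hFS, pYd_def]
  have h1 : 1 ≤ pSd π cut n ω := pSd_pos ω hn
  have h2 : 1 ≤ pHd π cut n ω := by unfold pHd; omega
  push_cast [Nat.cast_sub h1, Nat.cast_sub h2]
  ring

end AuxWeights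

section AuxTau

variable {Ω : Type*} {τ : ℕ → Ω → ℝ} {π cut : ℕ → Ω → ℕ}

lemma tau_strict_mono (hm : ∀ n, 1 ≤ n → ∀ ω, τ n ω < τ (n + 1) ω) (ω : Ω)
    {m n : ℕ} (h1 : 1 ≤ m) (h2 : m < n) : τ m ω < τ n ω := by
  induction n with
  | zero => omega
  | succ k ih =>
    rcases Nat.lt_or_ge m k with h | h
    · exact (ih h).trans (hm k (by omega) ω)
    · have : m = k := by omega
      subst this
      exact hm m h1 ω

lemma tau_le_iff (hm : ∀ n, 1 ≤ n → ∀ ω, τ n ω < τ (n + 1) ω) (ω : Ω)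
    {j n : ℕ} (hj : 1 ≤ j) (hn : 1 ≤ n) : τ j ω ≤ τ n ω ↔ j ≤ n := by
  constructor
  · intro h
    by_contra hc
    exact absurd h (not_le.mpr (tau_strict_mono hm ω hn (by omega)))
  · intro h
    rcases Nat.lt_or_ge j n with h' | h'
    · exact (tau_strict_mono hm ω hj h').le
    · have : j = n := by omega
      subst this; exact le_rfl

lemma clusterRootSeq_one (ω : Ω) : clusterRootSeq cut 1 ω = 1 := rfl

/-- At time `τ n`, the root cluster's half-edge count is the discrete `pHd`. -/
lemma clusterHalfEdges_eq (h1 : ∀ ω, τ 1 ω = 0)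
    (hm : ∀ n, 1 ≤ n → ∀ ω, τ n ω < τ (n + 1) ω) (ω : Ω) {n : ℕ} (hn : 1 ≤ n) :
    clusterHalfEdges τ π cut 1 (τ n ω) ω = pHd π cut n ω := by
  unfold clusterHalfEdges pHd
  have hτ1 : τ 1 ω ≤ τ n ω := (tau_le_iff hm ω le_rfl hn).mpr hn
  rw [clusterRootSeq_one, if_pos hτ1]
  congr 1
  have : {j : ℕ | 2 ≤ j ∧ τ j ω ≤ τ n ω ∧ cut j ω = 1 ∧
        clusterRoot π cut (π j ω) ω = 1}
      = ((Finset.Icc 2 n).filter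
        (fun j => cut j ω = 1 ∧ clusterRoot π cut (π j ω) ω = 1) : Finset ℕ) := by
    ext j
    simp only [Set.mem_setOf_eq, Finset.coe_filter, Finset.mem_Icc,
      Set.mem_setOf_eq]
    constructor
    · rintro ⟨hj2, hjτ, hc, hrt⟩
      exact ⟨⟨hj2, (tau_le_iff hm ω (by omega) hn).mp hjτ⟩, hc, hrt⟩
    · rintro ⟨⟨hj2, hjn⟩, hc, hrt⟩
      exact ⟨hj2, (tau_le_iff hm ω (by omega) hn).mpr hjn, hc, hrt⟩
  rw [this, Set.ncard_coe_finset]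

lemma clusterSize_eq (h1 : ∀ ω, τ 1 ω = 0)
    (hm : ∀ n, 1 ≤ n → ∀ ω, τ n ω < τ (n + 1) ω) (ω : Ω) {n : ℕ} (hn : 1 ≤ n) :
    clusterSize τ π cut 1 (τ n ω) ω = pSd π cut n ω := by
  unfold clusterSize pSd
  have : {j : ℕ | 1 ≤ j ∧ τ j ω ≤ τ n ω ∧ clusterRoot π cut j ω = clusterRootSeq cut 1 ω}
      = ((Finset.Icc 1 n).filter (fun j => clusterRoot π cut j ω = 1) : Finset ℕ) := by
    ext j
    simp only [Set.mem_setOf_eq, Finset.coe_filter, Finset.mem_Icc, clusterRootSeq_one,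
      Set.mem_setOf_eq]
    constructor
    · rintro ⟨hj1, hjτ, hrt⟩
      exact ⟨⟨hj1, (tau_le_iff hm ω hj1 hn).mp hjτ⟩, hrt⟩
    · rintro ⟨⟨hj1, hjn⟩, hrt⟩
      exact ⟨hj1, (tau_le_iff hm ω hj1 hn).mpr hjn, hrt⟩
  rw [this, Set.ncard_coe_finset]

lemma clusterY_eq (b : ℝ) (h1 : ∀ ω, τ 1 ω = 0)
    (hm : ∀ n, 1 ≤ n → ∀ ω, τ n ω < τ (n + 1) ω) (ω : Ω) {n : ℕ} (hn : 1 ≤ n) :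
    clusterY b τ π cut 1 (τ n ω) ω = pYd π cut b n ω := by
  unfold clusterY clusterBirth
  rw [clusterRootSeq_one, if_pos ((tau_le_iff hm ω le_rfl hn).mpr hn),
    clusterHalfEdges_eq h1 hm ω hn, clusterSize_eq h1 hm ω hn, pYd_def]

end AuxTau


section AuxMeas

variable {Ω : Type*}

lemma measurable_nat_comp {β : Type*} {m' : MeasurableSpace Ω} [MeasurableSpace β]
    {g : Ω → ℕ → β} {h : Ω → ℕ} (hh : Measurable[m'] h)
    (hg : ∀ k, (∃ ω, h ω = k) → Measurable[m'] (fun ω => g ω k)) :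
    Measurable[m'] (fun ω => g ω (h ω)) := by
  intro s hs
  have heq : (fun ω => g ω (h ω)) ⁻¹' s
      = ⋃ k, {ω | h ω = k} ∩ ((fun ω => g ω k) ⁻¹' s) := by
    ext ω
    simp only [Set.mem_preimage, Set.mem_iUnion, Set.mem_inter_iff, Set.mem_setOf_eq]
    exact ⟨fun hx => ⟨h ω, rfl, hx⟩, by rintro ⟨k, hk, hx⟩; simpa [hk] using hx⟩
  rw [heq]
  apply MeasurableSet.iUnion
  intro k
  by_cases hek : ∃ ω, h ω = k
  · exact (hh (measurableSet_singleton k)).inter (hg k hek hs)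
  · have : {ω | h ω = k} = ∅ := by
      ext ω; simp only [Set.mem_setOf_eq, Set.mem_empty_iff_false, iff_false]
      exact fun he => hek ⟨ω, he⟩
    simp [this]

variable {π cut : ℕ → Ω → ℕ}

lemma measurable_clusterRootAux {m' : MeasurableSpace Ω}
    (hr : ∀ k, 2 ≤ k → ∀ ω, 1 ≤ π k ω ∧ π k ω ≤ k - 1) {N : ℕ}
    (hπ : ∀ k, k ≤ N → Measurable[m'] (π k)) (hc : ∀ k, k ≤ N → Measurable[m'] (cut k)) :
    ∀ fuel, ∀ j, j ≤ N → Measurable[m'] (fun ω => clusterRootAux π cut ω fuel j) := by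
  intro fuel
  induction fuel with
  | zero => exact fun j _ => measurable_const
  | succ f ih =>
    intro j hj
    by_cases hj1 : j ≤ 1
    · simp only [clusterRootAux, if_pos hj1]
      exact measurable_const
    · simp only [clusterRootAux, if_neg hj1]
      apply Measurable.ite ((hc j hj) (measurableSet_singleton 1)) measurable_const
      exact measurable_nat_comp (hπ j hj)
        (fun k hk => by
          obtain ⟨ω, hω⟩ := hk
          have := hr j (by omega) ω
          exact ih k (by omega))

lemma measurable_clusterRoot {m' : MeasurableSpace Ω}
    (hr : ∀ k, 2 ≤ k → ∀ ω, 1 ≤ π k ω ∧ π k ω ≤ k - 1) {N : ℕ}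
    (hπ : ∀ k, k ≤ N → Measurable[m'] (π k)) (hc : ∀ k, k ≤ N → Measurable[m'] (cut k))
    {j : ℕ} (hj : j ≤ N) : Measurable[m'] (fun ω => clusterRoot π cut j ω) :=
  measurable_clusterRootAux hr hπ hc j j hj

lemma measurable_pSd_real {m' : MeasurableSpace Ω}
    (hr : ∀ k, 2 ≤ k → ∀ ω, 1 ≤ π k ω ∧ π k ω ≤ k - 1) {N : ℕ}
    (hπ : ∀ k, k ≤ N → Measurable[m'] (π k)) (hc : ∀ k, k ≤ N → Measurable[m'] (cut k))
    {n : ℕ} (hn : n ≤ N) : Measurable[m'] (fun ω => (pSd π cut n ω : ℝ)) := by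
  have : (fun ω => (pSd π cut n ω : ℝ))
      = fun ω => ∑ j ∈ Finset.Icc 1 n, (if clusterRoot π cut j ω = 1 then (1 : ℝ) else 0) := by
    funext ω
    rw [pSd, Finset.card_filter]
    push_cast
    rfl
  rw [this]
  apply Finset.measurable_sum
  intro j hj
  simp only [Finset.mem_Icc] at hj
  exact Measurable.ite
    ((measurable_clusterRoot (j := j) hr hπ hc (by omega)) (measurableSet_singleton 1))
    measurable_const measurable_const

lemma measurable_pHd_real {m' : MeasurableSpace Ω}
    (hr : ∀ k, 2 ≤ k → ∀ ω, 1 ≤ π k ω ∧ π k ω ≤ k - 1) {N : ℕ}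
    (hπ : ∀ k, k ≤ N → Measurable[m'] (π k)) (hc : ∀ k, k ≤ N → Measurable[m'] (cut k))
    {n : ℕ} (hn : n ≤ N) : Measurable[m'] (fun ω => (pHd π cut n ω : ℝ)) := by
  have : (fun ω => (pHd π cut n ω : ℝ))
      = fun ω => 1 + ∑ j ∈ Finset.Icc 2 n,
          (if cut j ω = 1 ∧ clusterRoot π cut (π j ω) ω = 1 then (1 : ℝ) else 0) := by
    funext ω
    rw [pHd, Finset.card_filter]
    push_cast
    rfl
  rw [this]
  apply Measurable.const_add
  apply Finset.measurable_sum
  intro j hj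
  simp only [Finset.mem_Icc] at hj
  have hπj : Measurable[m'] (fun ω => clusterRoot π cut (π j ω) ω) := by
    apply measurable_nat_comp (g := fun ω k => clusterRoot π cut k ω) (hπ j (by omega))
    intro k hk
    obtain ⟨ω, hω⟩ := hk
    have := hr j (by omega) ω
    exact measurable_clusterRoot (j := k) hr hπ hc (by omega)
  have hset : MeasurableSet[m']
      {ω | cut j ω = 1 ∧ clusterRoot π cut (π j ω) ω = 1} := by
    have : {ω | cut j ω = 1 ∧ clusterRoot π cut (π j ω) ω = 1}
        = (cut j) ⁻¹' {1} ∩ (fun ω => clusterRoot π cut (π j ω) ω) ⁻¹' {1} := rfl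
    rw [this]
    exact ((hc j (by omega)) (measurableSet_singleton 1)).inter
      (hπj (measurableSet_singleton 1))
  exact Measurable.ite hset measurable_const measurable_const

lemma measurable_pYd {m' : MeasurableSpace Ω} (b : ℝ)
    (hr : ∀ k, 2 ≤ k → ∀ ω, 1 ≤ π k ω ∧ π k ω ≤ k - 1) {N : ℕ}
    (hπ : ∀ k, k ≤ N → Measurable[m'] (π k)) (hc : ∀ k, k ≤ N → Measurable[m'] (cut k))
    {n : ℕ} (hn : n ≤ N) : Measurable[m'] (pYd π cut b n) := by
  have hS := measurable_pSd_real hr hπ hc hn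
  have hH := measurable_pHd_real hr hπ hc hn
  have : pYd π cut b n = fun ω =>
      b * ((pSd π cut n ω : ℝ) - 2 + (pHd π cut n ω : ℝ)) + (pSd π cut n ω : ℝ) := rfl
  rw [this]
  exact (((hS.sub measurable_const).add hH).const_mul b).add hS

/-- Auxiliary: independence w.r.t. a supremum, from pairwise-style hypotheses. -/
lemma indep_sup_right {m0 : MeasurableSpace Ω} {P : Measure Ω} [IsProbabilityMeasure P]
    {A B C : MeasurableSpace Ω} (hA : A ≤ m0) (hB : B ≤ m0) (hC : C ≤ m0)
    (hAB : ProbabilityTheory.Indep A B P) (hABC : ProbabilityTheory.Indep (A ⊔ B) C P) :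
    ProbabilityTheory.Indep A (B ⊔ C) P := by
  classical
  set p2 : Set (Set Ω) :=
    {s | ∃ bs cs, MeasurableSet[B] bs ∧ MeasurableSet[C] cs ∧ s = bs ∩ cs} with hp2
  have hgen : B ⊔ C = MeasurableSpace.generateFrom p2 := by
    apply le_antisymm
    · apply sup_le
      · intro s hs
        exact MeasurableSpace.measurableSet_generateFrom
          ⟨s, Set.univ, hs, MeasurableSet.univ, (Set.inter_univ s).symm⟩
      · intro s hs
        exact MeasurableSpace.measurableSet_generateFrom
          ⟨Set.univ, s, MeasurableSet.univ, hs, (Set.univ_inter s).symm⟩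
    · apply MeasurableSpace.generateFrom_le
      rintro s ⟨bs, cs, hbs, hcs, rfl⟩
      exact MeasurableSet.inter
        ((le_sup_left : B ≤ B ⊔ C) _ hbs) ((le_sup_right : C ≤ B ⊔ C) _ hcs)
  have hpi2 : IsPiSystem p2 := by
    rintro s ⟨bs, cs, hbs, hcs, rfl⟩ t ⟨bt, ct, hbt, hct, rfl⟩ _
    exact ⟨bs ∩ bt, cs ∩ ct, hbs.inter hbt, hcs.inter hct, by
      rw [Set.inter_inter_inter_comm]⟩
  set p1 : Set (Set Ω) := {s | MeasurableSet[A] s} with hp1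
  have hIS : ProbabilityTheory.IndepSets p1 p2 P := by
    rw [ProbabilityTheory.IndepSets_iff]
    rintro s t hs ⟨bs, cs, hbs, hcs, rfl⟩
    rw [ProbabilityTheory.Indep_iff] at hAB hABC
    have e1 : P (s ∩ (bs ∩ cs)) = P ((s ∩ bs) ∩ cs) := by rw [Set.inter_assoc]
    have e2 : P ((s ∩ bs) ∩ cs) = P (s ∩ bs) * P cs :=
      hABC _ _ (((le_sup_left : A ≤ A ⊔ B) _ hs).inter ((le_sup_right : B ≤ A ⊔ B) _ hbs)) hcs
    have e3 : P (s ∩ bs) = P s * P bs := hAB _ _ hs hbs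
    have e4 : P (bs ∩ cs) = P bs * P cs :=
      hABC _ _ ((le_sup_right : B ≤ A ⊔ B) _ hbs) hcs
    rw [e1, e2, e3, e4, mul_assoc]
  exact ProbabilityTheory.IndepSets.indep hA (hgen ▸ sup_le hB hC)
    (fun s hs t ht _ => hs.inter ht) hpi2
    (@MeasurableSpace.generateFrom_measurableSet Ω A).symm hgen hIS

end AuxMeas


section AuxProb

variable {Ω : Type*} {m0 : MeasurableSpace Ω} {P : Measure Ω} [IsProbabilityMeasure P]
  {b p : ℝ} {τ : ℕ → Ω → ℝ} {π cut : ℕ → Ω → ℕ}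

lemma aux_integrable_bdd {f : Ω → ℝ} {C : ℝ} (hf : AEStronglyMeasurable f P)
    (h : ∀ ω, |f ω| ≤ C) : Integrable f P :=
  ⟨hf, HasFiniteIntegral.of_bounded (C := C)
    (ae_of_all _ (fun ω => by simpa [Real.norm_eq_abs] using h ω))⟩

/-- σ-algebra generated by all the cut variables. -/
def cutσ (cut : ℕ → Ω → ℕ) : MeasurableSpace Ω :=
  MeasurableSpace.comap (fun ω (k : ℕ) => cut k ω) inferInstance

/-- σ-algebra generated by all the attachment variables. -/
def piσ (π : ℕ → Ω → ℕ) : MeasurableSpace Ω :=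
  MeasurableSpace.comap (fun ω (k : ℕ) => π k ω) inferInstance

/-- σ-algebra generated by the cut variables `cut 2, …, cut n`. -/
def cvecσ (cut : ℕ → Ω → ℕ) (n : ℕ) : MeasurableSpace Ω :=
  MeasurableSpace.comap (fun ω (j : Fin (n - 1)) => cut ((j : ℕ) + 2) ω) inferInstance

lemma aux_sup_eq_gen (B C : MeasurableSpace Ω) :
    B ⊔ C = MeasurableSpace.generateFrom
      {s | ∃ bs cs, MeasurableSet[B] bs ∧ MeasurableSet[C] cs ∧ s = bs ∩ cs} := by
  apply le_antisymm
  · apply sup_le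
    · intro s hs
      exact MeasurableSpace.measurableSet_generateFrom
        ⟨s, Set.univ, hs, MeasurableSet.univ, (Set.inter_univ s).symm⟩
    · intro s hs
      exact MeasurableSpace.measurableSet_generateFrom
        ⟨Set.univ, s, MeasurableSet.univ, hs, (Set.univ_inter s).symm⟩
  · apply MeasurableSpace.generateFrom_le
    rintro s ⟨bs, cs, hbs, hcs, rfl⟩
    exact MeasurableSet.inter
      ((le_sup_left : B ≤ B ⊔ C) _ hbs) ((le_sup_right : C ≤ B ⊔ C) _ hcs)

lemma aux_pi_sys (B C : MeasurableSpace Ω) :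
    IsPiSystem {s : Set Ω | ∃ bs cs, MeasurableSet[B] bs ∧ MeasurableSet[C] cs ∧ s = bs ∩ cs} := by
  rintro s ⟨bs, cs, hbs, hcs, rfl⟩ t ⟨bt, ct, hbt, hct, rfl⟩ _
  exact ⟨bs ∩ bt, cs ∩ ct, hbs.inter hbt, hcs.inter hct, by rw [Set.inter_inter_inter_comm]⟩

section WithModel

variable (hper : IsContPATPerc P b p τ π cut)
include hper

lemma aux_cutσ_le : cutσ cut ≤ m0 :=
  (measurable_pi_lambda _ (fun k => hper.meas_cut k)).comap_le

lemma aux_piσ_le : piσ π ≤ m0 :=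
  (measurable_pi_lambda _ (fun k => hper.toPAT.meas_π k)).comap_le

lemma aux_patHist_le (n : ℕ) : patHist π n ≤ m0 :=
  (measurable_pi_lambda _ (fun j => hper.toPAT.meas_π _)).comap_le

omit hper

lemma aux_meas_piσ_π (k : ℕ) : Measurable[piσ π] (π k) := by
  have h : Measurable[piσ π] (fun ω (k : ℕ) => π k ω) := Measurable.of_comap_le le_rfl
  exact (measurable_pi_apply k).comp h

lemma aux_meas_cutσ_cut (k : ℕ) : Measurable[cutσ cut] (cut k) := by
  have h : Measurable[cutσ cut] (fun ω (k : ℕ) => cut k ω) := Measurable.of_comap_le le_rfl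
  exact (measurable_pi_apply k).comp h

lemma aux_meas_cvecσ_cut {n k : ℕ} (h2 : 2 ≤ k) (hk : k ≤ n) :
    Measurable[cvecσ cut n] (cut k) := by
  have hlt : k - 2 < n - 1 := by omega
  have heq : cut k
      = (fun v : Fin (n - 1) → ℕ => v ⟨k - 2, hlt⟩)
        ∘ (fun ω (j : Fin (n - 1)) => cut ((j : ℕ) + 2) ω) := by
    funext ω
    simp only [Function.comp_apply]
    congr 1
    omega
  rw [heq]
  have h : Measurable[cvecσ cut n] (fun ω (j : Fin (n - 1)) => cut ((j : ℕ) + 2) ω) :=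
    Measurable.of_comap_le le_rfl
  exact (measurable_pi_apply _).comp h

lemma aux_patHist_le_piσ (n : ℕ) : patHist π n ≤ piσ π := by
  have htr : Measurable (fun (v : ℕ → ℕ) (j : Fin n) => v ((j : ℕ) + 1)) :=
    measurable_pi_lambda _ (fun j => measurable_pi_apply _)
  have : patHist π n = MeasurableSpace.comap
      ((fun (v : ℕ → ℕ) (j : Fin n) => v ((j : ℕ) + 1)) ∘ (fun ω (k : ℕ) => π k ω))
      inferInstance := rfl
  rw [this, ← MeasurableSpace.comap_comp]
  exact MeasurableSpace.comap_mono htr.comap_le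

lemma aux_cvecσ_le_cutσ (n : ℕ) : cvecσ cut n ≤ cutσ cut := by
  have htr : Measurable (fun (v : ℕ → ℕ) (j : Fin (n - 1)) => v ((j : ℕ) + 2)) :=
    measurable_pi_lambda _ (fun j => measurable_pi_apply _)
  have : cvecσ cut n = MeasurableSpace.comap
      ((fun (v : ℕ → ℕ) (j : Fin (n - 1)) => v ((j : ℕ) + 2)) ∘ (fun ω (k : ℕ) => cut k ω))
      inferInstance := rfl
  rw [this, ← MeasurableSpace.comap_comp]
  exact MeasurableSpace.comap_mono htr.comap_le

lemma aux_comap_cut_le_cutσ (k : ℕ) :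
    MeasurableSpace.comap (cut k) inferInstance ≤ cutσ cut := by
  have : MeasurableSpace.comap (cut k) inferInstance = MeasurableSpace.comap
      ((fun v : ℕ → ℕ => v k) ∘ (fun ω (k : ℕ) => cut k ω)) inferInstance := rfl
  rw [this, ← MeasurableSpace.comap_comp]
  exact MeasurableSpace.comap_mono (measurable_pi_apply k).comap_le

lemma aux_meas_patHist_π {n k : ℕ} (h1 : 1 ≤ k) (hk : k ≤ n) :
    Measurable[patHist π n] (π k) := by
  have hlt : k - 1 < n := by omega
  have heq : π k
      = (fun v : Fin n → ℕ => v ⟨k - 1, hlt⟩) ∘ (fun ω (j : Fin n) => π ((j : ℕ) + 1) ω) := by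
    funext ω
    simp only [Function.comp_apply]
    congr 1
    omega
  rw [heq]
  have h : Measurable[patHist π n] (fun ω (j : Fin n) => π ((j : ℕ) + 1) ω) :=
    Measurable.of_comap_le le_rfl
  exact (measurable_pi_apply _).comp h

include hper

lemma aux_indep_cut_pi : ProbabilityTheory.Indep (cutσ cut) (piσ π) P := by
  have h1 : ProbabilityTheory.Indep (cutσ cut)
      (MeasurableSpace.comap (fun ω => ((fun n : ℕ => τ n ω), (fun n : ℕ => π n ω)))
        inferInstance) P :=
    (ProbabilityTheory.IndepFun_iff_Indep _ _ _).mp hper.cut_indep_tree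
  apply ProbabilityTheory.indep_of_indep_of_le_right h1
  have : piσ π = MeasurableSpace.comap
      (Prod.snd ∘ (fun ω => ((fun n : ℕ => τ n ω), (fun n : ℕ => π n ω))))
      inferInstance := rfl
  rw [this, ← MeasurableSpace.comap_comp]
  exact MeasurableSpace.comap_mono measurable_snd.comap_le

lemma aux_indep_cut_rest {n : ℕ} (hn : 1 ≤ n) :
    ProbabilityTheory.Indep (MeasurableSpace.comap (cut (n + 1)) inferInstance)
      (cvecσ cut n ⊔ piσ π) P := by
  have hA : MeasurableSpace.comap (cut (n + 1)) inferInstance ≤ m0 :=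
    (hper.meas_cut _).comap_le
  have hB : cvecσ cut n ≤ m0 := (aux_cvecσ_le_cutσ (cut := cut) n).trans (aux_cutσ_le hper)
  have hC : piσ π ≤ m0 := aux_piσ_le hper
  have hAB : ProbabilityTheory.Indep (MeasurableSpace.comap (cut (n + 1)) inferInstance)
      (cvecσ cut n) P := by
    have hdisj : Disjoint ({n - 1} : Finset ℕ) (Finset.range (n - 1)) := by
      simp [Finset.disjoint_singleton_left, Finset.mem_range]
    have hIF := hper.cut_iIndep.indepFun_finset _ _ hdisj (fun i => hper.meas_cut _)
    have hφ : Measurable (fun v : (({n - 1} : Finset ℕ) → ℕ) =>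
        v ⟨n - 1, Finset.mem_singleton_self _⟩) := measurable_pi_apply _
    have hψ : Measurable (fun (v : ((Finset.range (n - 1) : Finset ℕ) → ℕ)) (j : Fin (n - 1)) =>
        v ⟨(j : ℕ), Finset.mem_range.mpr j.2⟩) :=
      measurable_pi_lambda _ (fun j => measurable_pi_apply _)
    have hIF2 := hIF.comp hφ hψ
    have he1 : ((fun v : (({n - 1} : Finset ℕ) → ℕ) => v ⟨n - 1, Finset.mem_singleton_self _⟩)
        ∘ (fun a (i : ({n - 1} : Finset ℕ)) => cut ((i : ℕ) + 2) a)) = cut (n + 1) := by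
      funext a
      simp only [Function.comp_apply]
      congr 1
      omega
    have he2 : ((fun (v : ((Finset.range (n - 1) : Finset ℕ) → ℕ)) (j : Fin (n - 1)) =>
          v ⟨(j : ℕ), Finset.mem_range.mpr j.2⟩)
        ∘ (fun a (i : (Finset.range (n - 1) : Finset ℕ)) => cut ((i : ℕ) + 2) a))
        = fun ω (j : Fin (n - 1)) => cut ((j : ℕ) + 2) ω := rfl
    rw [he1, he2] at hIF2
    exact (ProbabilityTheory.IndepFun_iff_Indep _ _ _).mp hIF2
  have hABC : ProbabilityTheory.Indep
      ((MeasurableSpace.comap (cut (n + 1)) inferInstance) ⊔ cvecσ cut n) (piσ π) P := by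
    apply ProbabilityTheory.indep_of_indep_of_le_left (aux_indep_cut_pi hper)
    exact sup_le (aux_comap_cut_le_cutσ (cut := cut) (n + 1)) (aux_cvecσ_le_cutσ (cut := cut) n)
  exact indep_sup_right hA hB hC hAB hABC

/-- expectation of a function of `cut (n+1)` -/
lemma aux_integral_cutG (hp : p ∈ Set.Ioo (0 : ℝ) 1) {n : ℕ} (hn : 1 ≤ n) (G : ℕ → ℝ) :
    ∫ ω, G (cut (n + 1) ω) ∂P = (1 - p) * G 1 + p * G 0 := by
  have h1 : ∫ ω, G (cut (n + 1) ω) ∂P = ∫ x, G x ∂(P.map (cut (n + 1))) :=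
    (integral_map (hper.meas_cut _).aemeasurable
      (Measurable.of_discrete (f := G)).aestronglyMeasurable).symm
  rw [h1, hper.cut_law (n + 1) (by omega)]
  have hint : ∀ (c : ℝ≥0∞) (x : ℕ), c ≠ ⊤ → Integrable G (c • Measure.dirac x) := by
    intro c x hc
    refine ⟨(Measurable.of_discrete (f := G)).aestronglyMeasurable, ?_⟩
    rw [HasFiniteIntegral, lintegral_smul_measure, lintegral_dirac]
    exact ENNReal.mul_lt_top hc.lt_top ENNReal.coe_lt_top
  rw [integral_add_measure (hint _ _ ENNReal.ofReal_ne_top) (hint _ _ ENNReal.ofReal_ne_top),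
    integral_smul_measure, integral_smul_measure, integral_dirac, integral_dirac,
    ENNReal.toReal_ofReal (by linarith [hp.2]), ENNReal.toReal_ofReal (le_of_lt hp.1)]
  simp [smul_eq_mul]

/-- product formula for a function of `cut (n+1)` against a random variable measurable
w.r.t. the earlier cuts and the attachment choices. -/
lemma aux_integral_mul_cutG {n : ℕ} (hn : 1 ≤ n) (G : ℕ → ℝ) {f : Ω → ℝ}
    (hf : Measurable[cvecσ cut n ⊔ piσ π] f) :
    ∫ ω, G (cut (n + 1) ω) * f ω ∂P
      = (∫ ω, G (cut (n + 1) ω) ∂P) * ∫ ω, f ω ∂P := by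
  have hB : cvecσ cut n ≤ m0 := (aux_cvecσ_le_cutσ (cut := cut) n).trans (aux_cutσ_le hper)
  have hC : piσ π ≤ m0 := aux_piσ_le hper
  have hIF : ProbabilityTheory.IndepFun (fun ω => G (cut (n + 1) ω)) f P := by
    rw [ProbabilityTheory.IndepFun_iff_Indep]
    apply ProbabilityTheory.indep_of_indep_of_le_right
      (ProbabilityTheory.indep_of_indep_of_le_left (aux_indep_cut_rest hper hn) ?_) ?_
    · exact Measurable.comap_le
        ((Measurable.of_discrete (f := G)).comp (Measurable.of_comap_le le_rfl))
    · exact hf.comap_le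
  have := hIF.integral_mul_eq_mul_integral
    ((Measurable.of_discrete (f := G)).comp (hper.meas_cut _)).aestronglyMeasurable
    (hf.mono (sup_le hB hC) le_rfl).aestronglyMeasurable
  simpa [Pi.mul_apply] using this

end WithModel

end AuxProb


section AuxE1

variable {Ω : Type*} {m0 : MeasurableSpace Ω} {P : Measure Ω} [IsProbabilityMeasure P]
  {b p : ℝ} {τ : ℕ → Ω → ℝ} {π cut : ℕ → Ω → ℕ}
variable (hper : IsContPATPerc P b p τ π cut)
include hper

lemma aux_E1 (hb : 0 < b) {n i : ℕ} (hn : 1 ≤ n) (hi1 : 1 ≤ i) (hin : i ≤ n)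
    {s : Set Ω} (hs : MeasurableSet[patHist π n ⊔ cutσ cut] s) :
    ∫ ω in s, (if π (n + 1) ω = i then (1 : ℝ) else 0) ∂P
      = ∫ ω in s, patWeight b π n i ω / ((b + 1) * n - b) ∂P := by
  classical
  set f : Ω → ℝ := fun ω => if π (n + 1) ω = i then (1 : ℝ) else 0 with hf
  set g : Ω → ℝ := fun ω => patWeight b π n i ω / ((b + 1) * n - b) with hg
  have hpatle : patHist π n ≤ m0 := aux_patHist_le hper n
  have hcutle : cutσ cut ≤ m0 := aux_cutσ_le hper
  have hmle : patHist π n ⊔ cutσ cut ≤ m0 := sup_le hpatle hcutle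
  have hn1 : (1:ℝ) ≤ (n:ℝ) := by exact_mod_cast hn
  have hD : (0:ℝ) < (b + 1) * n - b := by nlinarith
  have hfπ : Measurable[piσ π] f := by
    apply Measurable.ite _ measurable_const measurable_const
    exact (aux_meas_piσ_π (π := π) (n+1)) (measurableSet_singleton i)
  have hgπ : Measurable[piσ π] g := by
    have hw : Measurable[piσ π] (fun ω => patWeight b π n i ω) := by
      have heq : (fun ω => patWeight b π n i ω) = fun ω =>
          1 + b * ∑ j ∈ Finset.Icc 2 n, (if π j ω = i then (1:ℝ) else 0) := by
        funext ω
        rw [patWeight, Finset.card_filter]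
        push_cast
        rfl
      rw [heq]
      apply Measurable.const_add
      apply Measurable.const_mul
      apply Finset.measurable_sum
      intro j hj
      exact Measurable.ite ((aux_meas_piσ_π (π := π) j) (measurableSet_singleton i))
        measurable_const measurable_const
    exact hw.div_const _
  have hfm : Measurable f := hfπ.mono (aux_piσ_le hper) le_rfl
  have hgm : Measurable g := hgπ.mono (aux_piσ_le hper) le_rfl
  have hfbd : ∀ ω, |f ω| ≤ 1 := by intro ω; rw [hf]; dsimp only; split <;> simp
  have hwbd : ∀ ω, |patWeight b π n i ω| ≤ 1 + b * n := by
    intro ω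
    rw [patWeight, abs_of_nonneg (by positivity)]
    have hcard : ((Finset.Icc 2 n).filter (fun j => π j ω = i)).card ≤ n := by
      refine le_trans (Finset.card_filter_le _ _) ?_
      rw [Nat.card_Icc]; omega
    have hc : (((Finset.Icc 2 n).filter (fun j => π j ω = i)).card : ℝ) ≤ (n : ℝ) := by
      exact_mod_cast hcard
    nlinarith
  have hgbd : ∀ ω, |g ω| ≤ (1 + b * n) / ((b + 1) * n - b) := by
    intro ω
    rw [hg]
    dsimp only
    rw [abs_div, abs_of_pos hD]
    exact (div_le_div_iff_of_pos_right hD).mpr (hwbd ω)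
  have hfint : Integrable f P := aux_integrable_bdd hfm.aestronglyMeasurable hfbd
  have hgint : Integrable g P := aux_integrable_bdd hgm.aestronglyMeasurable hgbd
  haveI : SigmaFinite (P.trim hpatle) := by
    have : IsFiniteMeasure (P.trim hpatle) := isFiniteMeasure_trim hpatle
    infer_instance
  have hbase : ∀ a c : Set Ω, MeasurableSet[patHist π n] a → MeasurableSet[cutσ cut] c →
      ∫ ω in (a ∩ c), f ω ∂P = ∫ ω in (a ∩ c), g ω ∂P := by
    intro a c ha hc
    have ham : MeasurableSet a := hpatle _ ha
    have hcm : MeasurableSet c := hcutle _ hc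
    set W : Ω → ℝ := c.indicator (fun _ => (1:ℝ)) with hW
    have hWc : Measurable[cutσ cut] W :=
      (measurable_const : Measurable[cutσ cut] (fun _ : Ω => (1:ℝ))).indicator hc
    have hkey : ∀ h : Ω → ℝ, (a ∩ c).indicator h = fun ω => a.indicator h ω * W ω := by
      intro h; funext ω
      by_cases h1 : ω ∈ a <;> by_cases h2 : ω ∈ c <;>
        simp [Set.indicator_apply, h1, h2, hW]
    have hIndep : ∀ (X : Ω → ℝ), Measurable[piσ π] X →
        ∫ ω, X ω * W ω ∂P = (∫ ω, X ω ∂P) * ∫ ω, W ω ∂P := by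
      intro X hX
      have hIF : ProbabilityTheory.IndepFun X W P := by
        rw [ProbabilityTheory.IndepFun_iff_Indep]
        exact ProbabilityTheory.indep_of_indep_of_le_right
          (ProbabilityTheory.indep_of_indep_of_le_left
            (ProbabilityTheory.Indep.symm (aux_indep_cut_pi hper)) hX.comap_le)
          hWc.comap_le
      have := hIF.integral_mul_eq_mul_integral (hX.mono (aux_piσ_le hper) le_rfl).aestronglyMeasurable
        ((hWc.mono hcutle le_rfl)).aestronglyMeasurable
      simpa [Pi.mul_apply] using this
    have e1 : ∫ ω in (a ∩ c), f ω ∂P = ∫ ω, a.indicator f ω * W ω ∂P := by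
      rw [← integral_indicator (ham.inter hcm), hkey f]
    have e2 : ∫ ω in (a ∩ c), g ω ∂P = ∫ ω, a.indicator g ω * W ω ∂P := by
      rw [← integral_indicator (ham.inter hcm), hkey g]
    have hX1 : Measurable[piσ π] (a.indicator f) :=
      hfπ.indicator ((aux_patHist_le_piσ (π := π) n) _ ha)
    have hX2 : Measurable[piσ π] (a.indicator g) :=
      hgπ.indicator ((aux_patHist_le_piσ (π := π) n) _ ha)
    rw [e1, e2, hIndep _ hX1, hIndep _ hX2]
    congr 1
    rw [integral_indicator ham, integral_indicator ham]
    have hce := hper.toPAT.cond_π n hn i hi1 hin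
    calc ∫ ω in a, f ω ∂P = ∫ ω in a, (P[f|patHist π n]) ω ∂P :=
          (setIntegral_condExp hpatle hfint ha).symm
      _ = ∫ ω in a, g ω ∂P := setIntegral_congr_ae ham (hce.mono (fun ω hω _ => hω))
  have htot : ∫ ω, f ω ∂P = ∫ ω, g ω ∂P := by
    have := hbase Set.univ Set.univ MeasurableSet.univ MeasurableSet.univ
    simpa using this
  refine @MeasurableSpace.induction_on_inter Ω
    (patHist π n ⊔ cutσ cut)
    (fun t _ => ∫ ω in t, f ω ∂P = ∫ ω in t, g ω ∂P)
    {t : Set Ω | ∃ bs cs, MeasurableSet[patHist π n] bs ∧ MeasurableSet[cutσ cut] cs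
      ∧ t = bs ∩ cs}
    (aux_sup_eq_gen _ _) (aux_pi_sys _ _) (by simp) ?_ ?_ ?_ s hs
  · rintro t ⟨a, c, ha, hc, rfl⟩
    exact hbase a c ha hc
  · intro t ht hC
    have h1 := integral_add_compl (hmle _ ht) hfint
    have h2 := integral_add_compl (hmle _ ht) hgint
    linarith
  · intro F hdisj hmeas hC
    rw [integral_iUnion (fun k => hmle _ (hmeas k)) hdisj hfint.integrableOn,
      integral_iUnion (fun k => hmle _ (hmeas k)) hdisj hgint.integrableOn]
    exact tsum_congr hC

end AuxE1


section AuxRec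

variable {Ω : Type*}

/-- indicator that vertex `n+1` attaches to the root cluster -/
def eRf (π cut : ℕ → Ω → ℕ) (n : ℕ) (ω : Ω) : ℝ :=
  if clusterRoot π cut (π (n + 1) ω) ω = 1 then 1 else 0

/-- the increment of the (approximate) martingale given the cut value -/
def gvf (b p : ℝ) (c : ℕ) : ℝ :=
  (if c = 1 then 1 else 0) - (1 - p) / (b + p) * (b + if c = 1 then 0 else 1)

/-- the increment of `Y` given the cut value -/
def hvf (b : ℝ) (c : ℕ) : ℝ := b + (if c = 1 then 0 else 1)

/-- the discrete martingale `H - (1-p)/(b+p) Y` -/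
def pMd (b p : ℝ) (π cut : ℕ → Ω → ℕ) (n : ℕ) (ω : Ω) : ℝ :=
  (pHd π cut n ω : ℝ) - (1 - p) / (b + p) * pYd π cut b n ω

variable {π cut : ℕ → Ω → ℕ}

lemma pY_rec (b : ℝ) (hr : ∀ k, 2 ≤ k → ∀ ω, 1 ≤ π k ω ∧ π k ω ≤ k - 1) (ω : Ω)
    {n : ℕ} (hn : 1 ≤ n) :
    pYd π cut b (n + 1) ω = pYd π cut b n ω + eRf π cut n ω * hvf b (cut (n + 1) ω) := by
  rw [pYd_def, pYd_def, pSd_succ hr ω hn, pHd_succ hr ω hn, eRf, hvf]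
  by_cases hc : cut (n + 1) ω = 1 <;>
    by_cases he : clusterRoot π cut (π (n + 1) ω) ω = 1 <;>
      simp only [hc, he, if_true, if_false, not_true, not_false_iff, true_and, false_and,
        and_true, and_false] <;> push_cast <;> ring

lemma pM_rec (b p : ℝ) (hr : ∀ k, 2 ≤ k → ∀ ω, 1 ≤ π k ω ∧ π k ω ≤ k - 1) (ω : Ω)
    {n : ℕ} (hn : 1 ≤ n) :
    pMd b p π cut (n + 1) ω = pMd b p π cut n ω + eRf π cut n ω * gvf b p (cut (n + 1) ω) := by
  rw [pMd, pMd, pY_rec b hr ω hn, pHd_succ hr ω hn]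
  unfold eRf gvf hvf
  by_cases hc : cut (n + 1) ω = 1 <;>
    by_cases he : clusterRoot π cut (π (n + 1) ω) ω = 1 <;>
      simp only [hc, he, if_true, if_false, not_true, not_false_iff, true_and, false_and,
        and_true, and_false] <;> push_cast <;> ring

lemma eRf_sq (n : ℕ) (ω : Ω) : eRf π cut n ω ^ 2 = eRf π cut n ω := by
  rw [eRf]; split <;> norm_num

lemma eRf_nonneg (n : ℕ) (ω : Ω) : 0 ≤ eRf π cut n ω := by
  rw [eRf]; split <;> norm_num

lemma eRf_le_one (n : ℕ) (ω : Ω) : eRf π cut n ω ≤ 1 := by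
  rw [eRf]; split <;> norm_num

lemma aux_meas_eR {m' : MeasurableSpace Ω}
    (hr : ∀ k, 2 ≤ k → ∀ ω, 1 ≤ π k ω ∧ π k ω ≤ k - 1) {n : ℕ} (hn : 1 ≤ n)
    (hπ : ∀ k, k ≤ n + 1 → Measurable[m'] (π k)) (hc : ∀ k, k ≤ n → Measurable[m'] (cut k)) :
    Measurable[m'] (eRf π cut n) := by
  have hroot : Measurable[m'] (fun ω => clusterRoot π cut (π (n + 1) ω) ω) := by
    apply measurable_nat_comp (g := fun ω k => clusterRoot π cut k ω) (hπ (n + 1) le_rfl)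
    intro k hk
    obtain ⟨ω, hω⟩ := hk
    have := hr (n + 1) (by omega) ω
    exact measurable_clusterRoot (j := k) hr (fun k hk => hπ k (by omega)) hc (by omega)
  exact Measurable.ite (hroot (measurableSet_singleton 1)) measurable_const measurable_const

lemma pYd_nonneg (b : ℝ) (hb : 0 < b) (ω : Ω) {n : ℕ} (hn : 1 ≤ n) :
    0 ≤ pYd π cut b n ω := by
  have h1 : 1 ≤ pSd π cut n ω := pSd_pos ω hn
  have h2 : 1 ≤ pHd π cut n ω := by unfold pHd; omega
  rw [pYd_def]
  have e1 : (1:ℝ) ≤ (pSd π cut n ω : ℝ) := by exact_mod_cast h1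
  have e2 : (1:ℝ) ≤ (pHd π cut n ω : ℝ) := by exact_mod_cast h2
  nlinarith

lemma pYd_le (b : ℝ) (hb : 0 < b) (ω : Ω) {n : ℕ} (hn : 1 ≤ n) :
    pYd π cut b n ω ≤ (2 * b + 1) * n := by
  have h1 : pSd π cut n ω ≤ n := pSd_le ω n
  have h2 : pHd π cut n ω ≤ n := pHd_le ω hn
  rw [pYd_def]
  have e1 : (pSd π cut n ω : ℝ) ≤ (n : ℝ) := by exact_mod_cast h1
  have e2 : (pHd π cut n ω : ℝ) ≤ (n : ℝ) := by exact_mod_cast h2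
  have e3 : (0:ℝ) ≤ (pSd π cut n ω : ℝ) := by positivity
  nlinarith

lemma pMd_abs_le (b p : ℝ) (hb : 0 < b) (hp : p ∈ Set.Ioo (0:ℝ) 1) (ω : Ω) {n : ℕ}
    (hn : 1 ≤ n) : |pMd b p π cut n ω| ≤ (1 + (1 - p) / (b + p) * (2 * b + 1)) * n := by
  have hc0 : 0 ≤ (1 - p) / (b + p) := by
    apply div_nonneg <;> nlinarith [hp.1, hp.2]
  have h2 : pHd π cut n ω ≤ n := pHd_le ω hn
  have e2 : (pHd π cut n ω : ℝ) ≤ (n : ℝ) := by exact_mod_cast h2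
  have e3 : (0:ℝ) ≤ (pHd π cut n ω : ℝ) := by positivity
  have hy1 := pYd_nonneg (π := π) (cut := cut) b hb ω hn
  have hy2 := pYd_le (π := π) (cut := cut) b hb ω hn
  rw [pMd, abs_le]
  constructor <;> nlinarith

lemma gvf_abs_le (b p : ℝ) (hb : 0 < b) (hp : p ∈ Set.Ioo (0:ℝ) 1) (c : ℕ) :
    |gvf b p c| ≤ 1 + (1 - p) / (b + p) * (b + 1) := by
  have hc0 : 0 ≤ (1 - p) / (b + p) := by
    apply div_nonneg <;> nlinarith [hp.1, hp.2]
  rw [gvf]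
  split <;> rw [abs_le] <;> constructor <;> nlinarith

lemma hvf_abs_le (b : ℝ) (hb : 0 < b) (c : ℕ) : |hvf b c| ≤ b + 1 := by
  rw [hvf]; split <;> rw [abs_le] <;> constructor <;> nlinarith

end AuxRec


section AuxExp

variable {Ω : Type*} {m0 : MeasurableSpace Ω} {P : Measure Ω} [IsProbabilityMeasure P]
  {b p : ℝ} {τ : ℕ → Ω → ℝ} {π cut : ℕ → Ω → ℕ}

lemma measurable_patWeight {m' : MeasurableSpace Ω} (b : ℝ) {n i : ℕ}
    (hπ : ∀ k, k ≤ n → Measurable[m'] (π k)) :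
    Measurable[m'] (fun ω => patWeight b π n i ω) := by
  have heq : (fun ω => patWeight b π n i ω) = fun ω =>
      1 + b * ∑ j ∈ Finset.Icc 2 n, (if π j ω = i then (1:ℝ) else 0) := by
    funext ω
    rw [patWeight, Finset.card_filter]
    push_cast
    rfl
  rw [heq]
  apply Measurable.const_add
  apply Measurable.const_mul
  apply Finset.measurable_sum
  intro j hj
  simp only [Finset.mem_Icc] at hj
  exact Measurable.ite ((hπ j hj.2) (measurableSet_singleton i))
    measurable_const measurable_const

variable (hper : IsContPATPerc P b p τ π cut) (hb : 0 < b) (hp : p ∈ Set.Ioo (0:ℝ) 1)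
include hper hb

lemma aux_r_eq {n : ℕ} (hn : 1 ≤ n) :
    ∫ ω, eRf π cut n ω ∂P = (∫ ω, pYd π cut b n ω ∂P) / ((b + 1) * n - b) := by
  classical
  have hr := hper.toPAT.π_range
  have hn1 : (1:ℝ) ≤ (n:ℝ) := by exact_mod_cast hn
  have hD : (0:ℝ) < (b + 1) * n - b := by nlinarith
  have hmleP : patHist π n ≤ m0 := aux_patHist_le hper n
  have hmleC : cutσ cut ≤ m0 := aux_cutσ_le hper
  have hmle : patHist π n ⊔ cutσ cut ≤ m0 := sup_le hmleP hmleC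
  have hπm1 : ∀ k, k ≤ n → Measurable[patHist π n ⊔ cutσ cut] (π k) := by
    intro k hk
    rcases Nat.eq_zero_or_pos k with rfl | hk1
    · have h0 : π 0 = fun _ => 0 := funext hper.toPAT.π_zero
      rw [h0]; exact measurable_const
    · exact (aux_meas_patHist_π (π := π) hk1 hk).mono le_sup_left le_rfl
  have hcm1 : ∀ k, k ≤ n → Measurable[patHist π n ⊔ cutσ cut] (cut k) :=
    fun k _ => (aux_meas_cutσ_cut (cut := cut) k).mono le_sup_right le_rfl
  have hAi : ∀ i, i ≤ n → MeasurableSet[patHist π n ⊔ cutσ cut]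
      {ω | clusterRoot π cut i ω = 1} :=
    fun i hi => (measurable_clusterRoot (j := i) hr hπm1 hcm1 hi) (measurableSet_singleton 1)
  have hrootm : ∀ i, i ≤ n → Measurable (fun ω => clusterRoot π cut i ω) :=
    fun i hi => measurable_clusterRoot (j := i) hr (fun k _ => hper.toPAT.meas_π k)
      (fun k _ => hper.meas_cut k) hi
  have hsum : ∀ ω, eRf π cut n ω = ∑ i ∈ Finset.Icc 1 n,
      (if clusterRoot π cut i ω = 1 then (1:ℝ) else 0)
        * (if π (n + 1) ω = i then (1:ℝ) else 0) := by
    intro ω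
    have hrg := hr (n + 1) (by omega) ω
    rw [Finset.sum_eq_single_of_mem (π (n + 1) ω)
      (by simp only [Finset.mem_Icc]; omega)]
    · simp [eRf]
    · intro i hi hne
      rw [if_neg (fun h : π (n + 1) ω = i => hne h.symm), mul_zero]
  have hfi_meas : ∀ i, Measurable (fun ω =>
      (if clusterRoot π cut i ω = 1 then (1:ℝ) else 0)
        * (if π (n + 1) ω = i then (1:ℝ) else 0)) := by
    intro i
    by_cases hi : i ≤ n
    · exact (Measurable.ite ((hrootm i hi) (measurableSet_singleton 1)) measurable_const
        measurable_const).mul (Measurable.ite ((hper.toPAT.meas_π (n+1))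
          (measurableSet_singleton i)) measurable_const measurable_const)
    · exact (Measurable.ite ((measurable_clusterRoot (j := i) hr
        (fun k _ => hper.toPAT.meas_π k) (fun k _ => hper.meas_cut k) le_rfl)
          (measurableSet_singleton 1)) measurable_const measurable_const).mul
        (Measurable.ite ((hper.toPAT.meas_π (n+1)) (measurableSet_singleton i))
          measurable_const measurable_const)
  have hfi_int : ∀ i, Integrable (fun ω =>
      (if clusterRoot π cut i ω = 1 then (1:ℝ) else 0)
        * (if π (n + 1) ω = i then (1:ℝ) else 0)) P := by
    intro i
    apply aux_integrable_bdd (hfi_meas i).aestronglyMeasurable (C := 1)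
    intro ω
    rw [abs_mul]
    have h1 : |if clusterRoot π cut i ω = 1 then (1:ℝ) else 0| ≤ 1 := by split <;> simp
    have h2 : |if π (n + 1) ω = i then (1:ℝ) else 0| ≤ 1 := by split <;> simp
    nlinarith [abs_nonneg (if clusterRoot π cut i ω = 1 then (1:ℝ) else 0),
      abs_nonneg (if π (n + 1) ω = i then (1:ℝ) else 0)]
  have hgi_meas : ∀ i, Measurable (fun ω =>
      (if clusterRoot π cut i ω = 1 then patWeight b π n i ω else 0) / ((b+1)*n - b)) := by
    intro i
    by_cases hi : i ≤ n
    · exact (Measurable.ite ((hrootm i hi) (measurableSet_singleton 1))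
        (measurable_patWeight b (fun k _ => hper.toPAT.meas_π k)) measurable_const).div_const _
    · exact (Measurable.ite ((measurable_clusterRoot (j := i) hr
        (fun k _ => hper.toPAT.meas_π k) (fun k _ => hper.meas_cut k) le_rfl)
          (measurableSet_singleton 1))
        (measurable_patWeight b (fun k _ => hper.toPAT.meas_π k)) measurable_const).div_const _
  have hwbd : ∀ i ω, |patWeight b π n i ω| ≤ 1 + b * n := by
    intro i ω
    rw [patWeight, abs_of_nonneg (by positivity)]
    have hcard : ((Finset.Icc 2 n).filter (fun j => π j ω = i)).card ≤ n := by
      refine le_trans (Finset.card_filter_le _ _) ?_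
      rw [Nat.card_Icc]; omega
    have hc : (((Finset.Icc 2 n).filter (fun j => π j ω = i)).card : ℝ) ≤ (n : ℝ) := by
      exact_mod_cast hcard
    nlinarith
  have hgi_int : ∀ i, Integrable (fun ω =>
      (if clusterRoot π cut i ω = 1 then patWeight b π n i ω else 0) / ((b+1)*n - b)) P := by
    intro i
    apply aux_integrable_bdd (hgi_meas i).aestronglyMeasurable (C := (1 + b*n)/((b+1)*n - b))
    intro ω
    rw [abs_div, abs_of_pos hD]
    apply (div_le_div_iff_of_pos_right hD).mpr
    split
    · exact hwbd i ω
    · simp only [abs_zero]; positivity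
  calc ∫ ω, eRf π cut n ω ∂P
      = ∫ ω, ∑ i ∈ Finset.Icc 1 n,
          (if clusterRoot π cut i ω = 1 then (1:ℝ) else 0)
            * (if π (n + 1) ω = i then (1:ℝ) else 0) ∂P :=
        integral_congr_ae (ae_of_all _ hsum)
    _ = ∑ i ∈ Finset.Icc 1 n, ∫ ω,
          (if clusterRoot π cut i ω = 1 then (1:ℝ) else 0)
            * (if π (n + 1) ω = i then (1:ℝ) else 0) ∂P :=
        integral_finset_sum _ (fun i _ => hfi_int i)
    _ = ∑ i ∈ Finset.Icc 1 n, ∫ ω,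
          (if clusterRoot π cut i ω = 1 then patWeight b π n i ω else 0)
            / ((b+1)*n - b) ∂P := by
        apply Finset.sum_congr rfl
        intro i hi
        simp only [Finset.mem_Icc] at hi
        have hind1 : (fun ω => (if clusterRoot π cut i ω = 1 then (1:ℝ) else 0)
            * (if π (n + 1) ω = i then (1:ℝ) else 0))
            = Set.indicator {ω | clusterRoot π cut i ω = 1}
              (fun ω => if π (n + 1) ω = i then (1:ℝ) else 0) := by
          funext ω
          by_cases h : clusterRoot π cut i ω = 1 <;>
            simp [Set.indicator_apply, h]
        have hind2 : (fun ω => (if clusterRoot π cut i ω = 1 then patWeight b π n i ω else 0)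
              / ((b+1)*n - b))
            = Set.indicator {ω | clusterRoot π cut i ω = 1}
              (fun ω => patWeight b π n i ω / ((b+1)*n - b)) := by
          funext ω
          by_cases h : clusterRoot π cut i ω = 1 <;>
            simp [Set.indicator_apply, h]
        rw [hind1, hind2, integral_indicator (hmle _ (hAi i hi.2)),
          integral_indicator (hmle _ (hAi i hi.2))]
        exact aux_E1 hper hb hn hi.1 hi.2 (hAi i hi.2)
    _ = ∫ ω, (∑ i ∈ Finset.Icc 1 n,
          (if clusterRoot π cut i ω = 1 then patWeight b π n i ω else 0)) / ((b+1)*n - b) ∂P := by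
        rw [← integral_finset_sum _ (fun i _ => hgi_int i)]
        congr 1
        funext ω
        rw [Finset.sum_div]
    _ = ∫ ω, pYd π cut b n ω / ((b+1)*n - b) ∂P := by
        congr 1
        funext ω
        rw [sum_weights b hr ω hn]
    _ = (∫ ω, pYd π cut b n ω ∂P) / ((b + 1) * n - b) := integral_div _ _

lemma aux_meas_pYd_amb (n : ℕ) : Measurable (pYd π cut b n) :=
  measurable_pYd b hper.toPAT.π_range (fun k _ => hper.toPAT.meas_π k)
    (fun k _ => hper.meas_cut k) (le_refl n)

lemma aux_int_pYd {n : ℕ} (hn : 1 ≤ n) : Integrable (pYd π cut b n) P := by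
  apply aux_integrable_bdd (aux_meas_pYd_amb hper hb n).aestronglyMeasurable
    (C := (2*b+1)*n)
  intro ω
  rw [abs_of_nonneg (pYd_nonneg b hb ω hn)]
  exact pYd_le b hb ω hn

lemma aux_meas_eR_amb {n : ℕ} (hn : 1 ≤ n) : Measurable (eRf π cut n) :=
  aux_meas_eR hper.toPAT.π_range hn (fun k _ => hper.toPAT.meas_π k)
    (fun k _ => hper.meas_cut k)

lemma aux_int_eR {n : ℕ} (hn : 1 ≤ n) : Integrable (eRf π cut n) P := by
  apply aux_integrable_bdd (aux_meas_eR_amb hper hb hn).aestronglyMeasurable (C := 1)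
  intro ω
  rw [abs_of_nonneg (eRf_nonneg n ω)]
  exact eRf_le_one n ω

lemma aux_meas_m2_cut {n : ℕ} : ∀ k, k ≤ n → Measurable[cvecσ cut n ⊔ piσ π] (cut k) := by
  intro k hk
  match k with
  | 0 =>
    have h0 : cut 0 = fun _ => 0 := funext hper.cut_zero
    rw [h0]; exact measurable_const
  | 1 =>
    have h0 : cut 1 = fun _ => 0 := funext hper.cut_one
    rw [h0]; exact measurable_const
  | (m + 2) =>
    exact (aux_meas_cvecσ_cut (cut := cut) (by omega) hk).mono le_sup_left le_rfl

lemma aux_meas_m2_eR {n : ℕ} (hn : 1 ≤ n) :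
    Measurable[cvecσ cut n ⊔ piσ π] (eRf π cut n) :=
  aux_meas_eR hper.toPAT.π_range hn
    (fun k _ => (aux_meas_piσ_π (π := π) k).mono le_sup_right le_rfl)
    (aux_meas_m2_cut hper hb)

lemma aux_meas_m2_pYd {n : ℕ} : Measurable[cvecσ cut n ⊔ piσ π] (pYd π cut b n) :=
  measurable_pYd b hper.toPAT.π_range
    (fun k _ => (aux_meas_piσ_π (π := π) k).mono
      (le_sup_right : piσ π ≤ cvecσ cut n ⊔ piσ π) le_rfl)
    (aux_meas_m2_cut hper hb) (le_refl n)

lemma aux_meas_m2_pMd {n : ℕ} : Measurable[cvecσ cut n ⊔ piσ π] (pMd b p π cut n) := by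
  have hH : Measurable[cvecσ cut n ⊔ piσ π] (fun ω => (pHd π cut n ω : ℝ)) :=
    measurable_pHd_real hper.toPAT.π_range
      (fun k _ => (aux_meas_piσ_π (π := π) k).mono
        (le_sup_right : piσ π ≤ cvecσ cut n ⊔ piσ π) le_rfl)
      (aux_meas_m2_cut hper hb) (le_refl n)
  exact hH.sub ((aux_meas_m2_pYd hper hb).const_mul _)

lemma aux_meas_pMd_amb (n : ℕ) : Measurable (pMd b p π cut n) := by
  have hH : Measurable (fun ω => (pHd π cut n ω : ℝ)) :=
    measurable_pHd_real hper.toPAT.π_range (fun k _ => hper.toPAT.meas_π k)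
      (fun k _ => hper.meas_cut k) (le_refl n)
  exact hH.sub ((aux_meas_pYd_amb hper hb n).const_mul _)

include hp

lemma aux_int_pMd_sq {n : ℕ} (hn : 1 ≤ n) :
    Integrable (fun ω => (pMd b p π cut n ω)^2) P := by
  apply aux_integrable_bdd ((aux_meas_pMd_amb hper hb n).pow_const 2
    ).aestronglyMeasurable (C := ((1 + (1 - p) / (b + p) * (2 * b + 1)) * n)^2)
  intro ω
  rw [abs_of_nonneg (sq_nonneg _), ← sq_abs]
  apply pow_le_pow_left₀ (abs_nonneg _) (pMd_abs_le b p hb hp ω hn)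

lemma aux_y_rec {n : ℕ} (hn : 1 ≤ n) :
    ∫ ω, pYd π cut b (n + 1) ω ∂P
      = ∫ ω, pYd π cut b n ω ∂P + (b + p) * ∫ ω, eRf π cut n ω ∂P := by
  have hr := hper.toPAT.π_range
  have hintY := aux_int_pYd hper hb hn
  have hvfm : Measurable (fun ω => hvf b (cut (n+1) ω)) :=
    (Measurable.of_discrete (f := hvf b)).comp (hper.meas_cut _)
  have hintprod : Integrable (fun ω => eRf π cut n ω * hvf b (cut (n+1) ω)) P := by
    apply aux_integrable_bdd ((aux_meas_eR_amb hper hb hn).mul hvfm).aestronglyMeasurable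
      (C := b + 1)
    intro ω
    simp only [Pi.mul_apply]
    rw [abs_mul]
    have h1 := abs_nonneg (eRf π cut n ω)
    have h2 : |eRf π cut n ω| ≤ 1 := by
      rw [abs_of_nonneg (eRf_nonneg n ω)]; exact eRf_le_one n ω
    have h3 := hvf_abs_le b hb (cut (n+1) ω)
    have h4 := abs_nonneg (hvf b (cut (n+1) ω))
    nlinarith
  calc ∫ ω, pYd π cut b (n + 1) ω ∂P
      = ∫ ω, (pYd π cut b n ω + eRf π cut n ω * hvf b (cut (n+1) ω)) ∂P :=
        integral_congr_ae (ae_of_all _ (fun ω => pY_rec b hr ω hn))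
    _ = ∫ ω, pYd π cut b n ω ∂P + ∫ ω, eRf π cut n ω * hvf b (cut (n+1) ω) ∂P :=
        integral_add hintY hintprod
    _ = ∫ ω, pYd π cut b n ω ∂P + (b + p) * ∫ ω, eRf π cut n ω ∂P := by
        congr 1
        have hcomm : (fun ω => eRf π cut n ω * hvf b (cut (n+1) ω))
            = fun ω => hvf b (cut (n+1) ω) * eRf π cut n ω := by
          funext ω; ring
        rw [hcomm, aux_integral_mul_cutG hper hn (hvf b) (aux_meas_m2_eR hper hb hn),
          aux_integral_cutG hper hp hn (hvf b)]
        have : (1 - p) * hvf b 1 + p * hvf b 0 = b + p := by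
          simp [hvf]; ring
        rw [this]

lemma aux_u_rec {n : ℕ} (hn : 1 ≤ n) :
    ∫ ω, (pMd b p π cut (n + 1) ω)^2 ∂P
      ≤ ∫ ω, (pMd b p π cut n ω)^2 ∂P
        + (1 + (1 - p)/(b + p) * (b + 1))^2 * ∫ ω, eRf π cut n ω ∂P := by
  classical
  have hr := hper.toPAT.π_range
  set C1 := 1 + (1 - p)/(b + p) * (b + 1) with hC1
  have hc0 : 0 ≤ (1 - p) / (b + p) := by
    apply div_nonneg <;> nlinarith [hp.1, hp.2]
  have hC1pos : 0 < C1 := by rw [hC1]; nlinarith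
  have hpath : ∀ ω, (pMd b p π cut (n + 1) ω)^2
      = (pMd b p π cut n ω)^2
        + gvf b p (cut (n+1) ω) * (2 * (pMd b p π cut n ω * eRf π cut n ω))
        + (gvf b p (cut (n+1) ω))^2 * eRf π cut n ω := by
    intro ω
    rw [pM_rec b p hr ω hn]
    have he := eRf_sq (π := π) (cut := cut) n ω
    have hexp : (pMd b p π cut n ω + eRf π cut n ω * gvf b p (cut (n+1) ω))^2
        = (pMd b p π cut n ω)^2
          + gvf b p (cut (n+1) ω) * (2 * (pMd b p π cut n ω * eRf π cut n ω))
          + (gvf b p (cut (n+1) ω))^2 * (eRf π cut n ω)^2 := by ring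
    rw [hexp, he]
  have hgvm : Measurable (fun ω => gvf b p (cut (n+1) ω)) :=
    (Measurable.of_discrete (f := gvf b p)).comp (hper.meas_cut _)
  have hMe_meas : Measurable (fun ω => 2 * (pMd b p π cut n ω * eRf π cut n ω)) :=
    (((aux_meas_pMd_amb hper hb n).mul (aux_meas_eR_amb hper hb hn)).const_mul 2)
  have hMbd : ∀ ω, |pMd b p π cut n ω| ≤ (1 + (1 - p) / (b + p) * (2 * b + 1)) * n :=
    fun ω => pMd_abs_le b p hb hp ω hn
  have hEbd : ∀ ω, |eRf π cut n ω| ≤ 1 := by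
    intro ω; rw [abs_of_nonneg (eRf_nonneg n ω)]; exact eRf_le_one n ω
  have hgbd : ∀ ω, |gvf b p (cut (n+1) ω)| ≤ C1 := fun ω => gvf_abs_le b p hb hp _
  set BM := (1 + (1 - p) / (b + p) * (2 * b + 1)) * (n : ℝ) with hBM
  have hbp : b + p ≠ 0 := by nlinarith [hp.1]
  have hterm2_int : Integrable (fun ω => gvf b p (cut (n+1) ω)
      * (2 * (pMd b p π cut n ω * eRf π cut n ω))) P := by
    apply aux_integrable_bdd (hgvm.mul hMe_meas).aestronglyMeasurable (C := C1 * (2 * BM))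
    intro ω
    have h1 := hgbd ω; have h2 := hMbd ω; have h3 := hEbd ω
    have h4 : |2 * (pMd b p π cut n ω * eRf π cut n ω)|
        = 2 * (|pMd b p π cut n ω| * |eRf π cut n ω|) := by
      rw [abs_mul, abs_mul, abs_two]
    simp only [Pi.mul_apply]
    rw [abs_mul, h4]
    have hBM0 : 0 ≤ BM := le_trans (abs_nonneg _) h2
    have hMe : |pMd b p π cut n ω| * |eRf π cut n ω| ≤ BM := by
      nlinarith [abs_nonneg (pMd b p π cut n ω), abs_nonneg (eRf π cut n ω)]
    have hfin : |gvf b p (cut (n+1) ω)| * (|pMd b p π cut n ω| * |eRf π cut n ω|)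
        ≤ C1 * BM :=
      mul_le_mul h1 hMe (mul_nonneg (abs_nonneg _) (abs_nonneg _)) hC1pos.le
    nlinarith [abs_nonneg (gvf b p (cut (n+1) ω)),
      mul_nonneg (abs_nonneg (pMd b p π cut n ω)) (abs_nonneg (eRf π cut n ω))]
  have hterm3_int : Integrable (fun ω => (gvf b p (cut (n+1) ω))^2 * eRf π cut n ω) P := by
    apply aux_integrable_bdd ((hgvm.pow_const 2).mul
      (aux_meas_eR_amb hper hb hn)).aestronglyMeasurable (C := C1^2)
    intro ω
    simp only [Pi.mul_apply]
    rw [abs_mul, abs_pow]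
    have h1 := hgbd ω; have h3 := hEbd ω
    nlinarith [abs_nonneg (gvf b p (cut (n+1) ω)), abs_nonneg (eRf π cut n ω)]
  have hsplit : ∫ ω, (pMd b p π cut (n + 1) ω)^2 ∂P
      = ∫ ω, (pMd b p π cut n ω)^2 ∂P
        + (∫ ω, gvf b p (cut (n+1) ω) * (2 * (pMd b p π cut n ω * eRf π cut n ω)) ∂P
          + ∫ ω, (gvf b p (cut (n+1) ω))^2 * eRf π cut n ω ∂P) := by
    calc ∫ ω, (pMd b p π cut (n + 1) ω)^2 ∂P
        = ∫ ω, ((pMd b p π cut n ω)^2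
            + (gvf b p (cut (n+1) ω) * (2 * (pMd b p π cut n ω * eRf π cut n ω))
              + (gvf b p (cut (n+1) ω))^2 * eRf π cut n ω)) ∂P :=
          integral_congr_ae (ae_of_all _ (fun ω => by simp only []; rw [hpath ω]; ring))
      _ = ∫ ω, (pMd b p π cut n ω)^2 ∂P
          + ∫ ω, (gvf b p (cut (n+1) ω) * (2 * (pMd b p π cut n ω * eRf π cut n ω))
              + (gvf b p (cut (n+1) ω))^2 * eRf π cut n ω) ∂P :=
          integral_add (aux_int_pMd_sq hper hb hp hn) (hterm2_int.add hterm3_int)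
      _ = ∫ ω, (pMd b p π cut n ω)^2 ∂P
          + (∫ ω, gvf b p (cut (n+1) ω) * (2 * (pMd b p π cut n ω * eRf π cut n ω)) ∂P
            + ∫ ω, (gvf b p (cut (n+1) ω))^2 * eRf π cut n ω ∂P) := by
          rw [integral_add hterm2_int hterm3_int]
  have hm2M : Measurable[cvecσ cut n ⊔ piσ π]
      (fun ω => 2 * (pMd b p π cut n ω * eRf π cut n ω)) :=
    (((aux_meas_m2_pMd hper hb).mul (aux_meas_m2_eR hper hb hn)).const_mul 2)
  have hterm2 : ∫ ω, gvf b p (cut (n+1) ω)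
      * (2 * (pMd b p π cut n ω * eRf π cut n ω)) ∂P = 0 := by
    rw [aux_integral_mul_cutG hper hn (gvf b p) hm2M,
      aux_integral_cutG hper hp hn (gvf b p)]
    have hz : (1 - p) * gvf b p 1 + p * gvf b p 0 = 0 := by
      simp only [gvf, if_pos rfl, if_neg (by norm_num : ¬ (0:ℕ) = 1), ↓reduceIte]
      field_simp
      ring
    rw [hz, zero_mul]
  have hterm3 : ∫ ω, (gvf b p (cut (n+1) ω))^2 * eRf π cut n ω ∂P
      ≤ C1^2 * ∫ ω, eRf π cut n ω ∂P := by
    have heq : (fun ω => (gvf b p (cut (n+1) ω))^2 * eRf π cut n ω)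
        = fun ω => (fun c => (gvf b p c)^2) (cut (n+1) ω) * eRf π cut n ω := rfl
    have := aux_integral_mul_cutG hper hn (fun c => (gvf b p c)^2)
      (aux_meas_m2_eR hper hb hn)
    rw [heq] at this ⊢
    rw [this, aux_integral_cutG hper hp hn (fun c => (gvf b p c)^2)]
    have hEnn : 0 ≤ ∫ ω, eRf π cut n ω ∂P := integral_nonneg (fun ω => eRf_nonneg n ω)
    apply mul_le_mul_of_nonneg_right _ hEnn
    have h1 : (gvf b p 1)^2 ≤ C1^2 := by
      rw [← sq_abs]; exact pow_le_pow_left₀ (abs_nonneg _) (gvf_abs_le b p hb hp 1) 2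
    have h0 : (gvf b p 0)^2 ≤ C1^2 := by
      rw [← sq_abs]; exact pow_le_pow_left₀ (abs_nonneg _) (gvf_abs_le b p hb hp 0) 2
    nlinarith [hp.1, hp.2]
  rw [hsplit, hterm2]
  linarith [hterm3]

end AuxExp


section AuxGrowth

variable {Ω : Type*} {m0 : MeasurableSpace Ω} {P : Measure Ω} [IsProbabilityMeasure P]
  {b p : ℝ} {τ : ℕ → Ω → ℝ} {π cut : ℕ → Ω → ℕ}
variable (hper : IsContPATPerc P b p τ π cut) (hb : 0 < b) (hp : p ∈ Set.Ioo (0:ℝ) 1)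
include hper hb hp

lemma aux_y_one : ∫ ω, pYd π cut b 1 ω ∂P = 1 := by
  have : (pYd π cut b 1) = fun _ => (1:ℝ) := funext (fun ω => pYd_one b ω)
  rw [this]
  simp

lemma aux_u_chain {n : ℕ} (hn : 1 ≤ n) :
    ∫ ω, (pMd b p π cut n ω)^2 ∂P
      ≤ ∫ ω, (pMd b p π cut 1 ω)^2 ∂P
        + ((1 + (1 - p)/(b + p) * (b + 1))^2 / (b + p))
          * ((∫ ω, pYd π cut b n ω ∂P) - 1) := by
  have hbp : (0:ℝ) < b + p := by nlinarith [hp.1]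
  induction n, hn using Nat.le_induction with
  | base =>
    rw [aux_y_one hper hb hp]
    simp
  | succ n hn ih =>
    have h1 := aux_u_rec hper hb hp hn
    have h2 := aux_y_rec hper hb hp hn
    have h3 : 0 ≤ ∫ ω, eRf π cut n ω ∂P := integral_nonneg (fun ω => eRf_nonneg n ω)
    rw [h2]
    have e : (1 + (1 - p)/(b + p) * (b + 1))^2 / (b + p)
          * ((∫ ω, pYd π cut b n ω ∂P + (b + p) * ∫ ω, eRf π cut n ω ∂P) - 1)
        = (1 + (1 - p)/(b + p) * (b + 1))^2 / (b + p) * ((∫ ω, pYd π cut b n ω ∂P) - 1)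
          + (1 + (1 - p)/(b + p) * (b + 1))^2 * ∫ ω, eRf π cut n ω ∂P := by
      field_simp
      ring
    rw [e]
    linarith

lemma aux_y_two : ∫ ω, pYd π cut b 2 ω ∂P = 1 + (b + p) := by
  have hbp : (0:ℝ) < b + p := by nlinarith [hp.1]
  have h2 := aux_y_rec hper hb hp (le_refl 1)
  have h3 := aux_r_eq hper hb (le_refl 1)
  have hD1 : ((b + 1) * (1:ℕ) - b : ℝ) = 1 := by push_cast; ring
  rw [h3, hD1, aux_y_one hper hb hp] at h2
  rw [show (2:ℕ) = 1 + 1 from rfl, h2]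
  norm_num

lemma aux_y_growth {n : ℕ} (hn : 1 ≤ n) :
    ∫ ω, pYd π cut b n ω ∂P
      ≤ (1 + (b + p)) * Real.exp ((2 * (b + p) / (b + 2)) * Real.log n) := by
  have hbp : (0:ℝ) < b + p := by nlinarith [hp.1]
  set q := 2 * (b + p) / (b + 2) with hq
  have hq0 : 0 < q := by
    apply div_pos <;> nlinarith
  have hK0 : (0:ℝ) < 1 + (b + p) := by nlinarith
  have hynn : ∀ m, 1 ≤ m → 0 ≤ ∫ ω, pYd π cut b m ω ∂P :=
    fun m hm => integral_nonneg (fun ω => pYd_nonneg b hb ω hm)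
  -- main claim for n ≥ 2
  have key : ∀ m, 2 ≤ m → ∫ ω, pYd π cut b m ω ∂P
      ≤ (1 + (b + p)) * Real.exp (q * Real.log ((m:ℝ) - 1)) := by
    intro m hm
    induction m, hm using Nat.le_induction with
    | base =>
      rw [aux_y_two hper hb hp]
      have : ((2:ℕ):ℝ) - 1 = 1 := by norm_num
      rw [this, Real.log_one, mul_zero, Real.exp_zero, mul_one]
    | succ m hm ih =>
      have hm1 : (1:ℕ) ≤ m := by omega
      have hmR : (2:ℝ) ≤ (m:ℝ) := by exact_mod_cast hm
      have hmpos : (0:ℝ) < (m:ℝ) := by linarith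
      have hD : (0:ℝ) < (b + 1) * m - b := by nlinarith
      have hrec := aux_y_rec hper hb hp hm1
      have hre := aux_r_eq hper hb hm1
      rw [hre] at hrec
      have hfac : ∫ ω, pYd π cut b (m+1) ω ∂P
          = (∫ ω, pYd π cut b m ω ∂P) * (1 + (b + p) / ((b + 1) * m - b)) := by
        rw [hrec]; field_simp
      have hfac_le : 1 + (b + p) / ((b + 1) * m - b) ≤ 1 + q / m := by
        have : (b + p) / ((b + 1) * m - b) ≤ q / m := by
          rw [div_le_div_iff₀ hD hmpos, hq]
          have h2b : (0:ℝ) < b + 2 := by nlinarith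
          rw [div_mul_eq_mul_div, le_div_iff₀ h2b]
          nlinarith [mul_nonneg (mul_nonneg hbp.le hb.le)
            (by linarith : (0:ℝ) ≤ (m:ℝ) - 2)]
        linarith
      have hexp_fac : 1 + q / m ≤ Real.exp (q / m) := by
        have := Real.add_one_le_exp (q / m)
        linarith
      have hstep : ∫ ω, pYd π cut b (m+1) ω ∂P
          ≤ ((1 + (b + p)) * Real.exp (q * Real.log ((m:ℝ) - 1))) * Real.exp (q / m) := by
        rw [hfac]
        apply mul_le_mul ih (hfac_le.trans hexp_fac) (by positivity) (by positivity)
      have hlog : Real.log ((m:ℝ) - 1) + 1 / m ≤ Real.log m := by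
        rcases eq_or_lt_of_le hmR with heq | hlt2
        · -- m = 2
          have hm2 : (m:ℝ) = 2 := heq.symm
          rw [hm2, show (2:ℝ) - 1 = 1 by norm_num, Real.log_one]
          nlinarith [Real.log_two_gt_d9]
        · have hm1pos : (0:ℝ) < (m:ℝ) - 1 := by linarith
          have hx : Real.log (((m:ℝ) - 1) / m) ≤ ((m:ℝ) - 1) / m - 1 :=
            Real.log_le_sub_one_of_pos (by positivity)
          rw [Real.log_div (by linarith) (by linarith)] at hx
          have : ((m:ℝ) - 1) / m - 1 = -(1 / m) := by field_simp; ring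
          rw [this] at hx
          linarith
      calc ∫ ω, pYd π cut b (m+1) ω ∂P
          ≤ ((1 + (b + p)) * Real.exp (q * Real.log ((m:ℝ) - 1))) * Real.exp (q / m) :=
            hstep
        _ = (1 + (b + p)) * Real.exp (q * (Real.log ((m:ℝ) - 1) + 1 / m)) := by
            rw [mul_assoc, ← Real.exp_add]
            congr 2
            field_simp
        _ ≤ (1 + (b + p)) * Real.exp (q * Real.log ((m:ℝ))) := by
            apply mul_le_mul_of_nonneg_left _ hK0.le
            apply Real.exp_le_exp.mpr
            apply mul_le_mul_of_nonneg_left hlog hq0.le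
        _ = (1 + (b + p)) * Real.exp (q * Real.log ((↑(m + 1) : ℝ) - 1)) := by
            push_cast
            norm_num
  rcases Nat.lt_or_ge n 2 with h2 | h2
  · have : n = 1 := by omega
    subst this
    rw [aux_y_one hper hb hp]
    have : (0:ℝ) ≤ q * Real.log 1 := by rw [Real.log_one]; simp
    have he : (1:ℝ) ≤ Real.exp (q * Real.log ((1:ℕ):ℝ)) := by
      simp [Real.exp_zero]
    nlinarith [he]
  · have hk := key n h2
    refine hk.trans ?_
    apply mul_le_mul_of_nonneg_left _ hK0.le
    apply Real.exp_le_exp.mpr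
    apply mul_le_mul_of_nonneg_left _ hq0.le
    have hn2 : (2:ℝ) ≤ (n:ℝ) := by exact_mod_cast h2
    apply Real.log_le_log (by linarith) (by linarith)

end AuxGrowth

/-- **Lemma 5 (control of the half-edges of the root cluster).**  For `b > 0` and
`κ = (b+p)/(b+1)`, `(H_1^{(p)}(τ_n) - ((1-p)/(b+p)) Y_1^{(p)}(τ_n))/n^κ → 0` in `L²`
as `n → ∞`. -/
theorem contPAT_root_cluster_half_edges
    {Ω : Type*} [MeasurableSpace Ω] (P : Measure Ω) [IsProbabilityMeasure P]
    (b p : ℝ) (hb : 0 < b) (hp : p ∈ Set.Ioo (0 : ℝ) 1)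
    (τ : ℕ → Ω → ℝ) (π : ℕ → Ω → ℕ) (cut : ℕ → Ω → ℕ)
    (hmodel : IsContPATPerc P b p τ π cut)
    (κ : ℝ) (hκ : κ = (b + p) / (b + 1)) :
    Tendsto
      (fun n : ℕ => ∫ ω,
        (((clusterHalfEdges τ π cut 1 (τ n ω) ω : ℝ)
            - (1 - p) / (b + p) * clusterY b τ π cut 1 (τ n ω) ω) / (n : ℝ) ^ κ) ^ 2 ∂P)
      atTop (𝓝 0) := by
  classical
  have hper := hmodel
  have hbp : (0:ℝ) < b + p := by nlinarith [hp.1]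
  have hκ0 : 0 < κ := by
    rw [hκ]; apply div_pos <;> nlinarith [hp.1]
  set q := 2 * (b + p) / (b + 2) with hqdef
  have hq0 : 0 < q := by apply div_pos <;> nlinarith [hp.1]
  have hq2κ : q < 2 * κ := by
    have h2κ : 2 * κ = 2 * (b + p) / (b + 1) := by rw [hκ]; ring
    rw [h2κ, hqdef, div_lt_div_iff₀ (by nlinarith) (by nlinarith)]
    nlinarith [hp.1]
  set u : ℕ → ℝ := fun m => ∫ ω, (pMd b p π cut m ω)^2 ∂P with hu
  set C2 := (1 + (1 - p)/(b + p) * (b + 1))^2 / (b + p) with hC2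
  have hc0 : 0 ≤ (1 - p) / (b + p) := by
    apply div_nonneg <;> nlinarith [hp.1, hp.2]
  have hC2nn : 0 ≤ C2 := by rw [hC2]; positivity
  set K0 := 1 + (b + p) with hK0
  have hK0pos : 0 < K0 := by rw [hK0]; nlinarith
  have hub : ∀ n : ℕ, 1 ≤ n → u n ≤ u 1 + C2 * (K0 * Real.exp (q * Real.log n)) := by
    intro n hn
    have h1 := aux_u_chain hper hb hp hn
    have h2 := aux_y_growth hper hb hp hn
    have hC2nn' : (0:ℝ) ≤ (1 + (1 - p)/(b + p) * (b + 1))^2 / (b + p) :=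
      div_nonneg (sq_nonneg _) hbp.le
    have h4 := mul_le_mul_of_nonneg_left h2 hC2nn'
    show (∫ ω, (pMd b p π cut n ω)^2 ∂P)
      ≤ (∫ ω, (pMd b p π cut 1 ω)^2 ∂P)
        + ((1 + (1 - p)/(b + p) * (b + 1))^2 / (b + p)) * ((1 + (b + p))
          * Real.exp ((2 * (b + p) / (b + 2)) * Real.log n))
    nlinarith [h1, h4]
  have hIeq : ∀ n : ℕ, 1 ≤ n →
      (∫ ω, (((clusterHalfEdges τ π cut 1 (τ n ω) ω : ℝ)
          - (1 - p) / (b + p) * clusterY b τ π cut 1 (τ n ω) ω) / (n : ℝ) ^ κ) ^ 2 ∂P)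
        = u n / ((n:ℝ) ^ κ)^2 := by
    intro n hn
    have hcongr : ∀ ω, (((clusterHalfEdges τ π cut 1 (τ n ω) ω : ℝ)
          - (1 - p) / (b + p) * clusterY b τ π cut 1 (τ n ω) ω) / (n : ℝ) ^ κ) ^ 2
        = (pMd b p π cut n ω)^2 / ((n:ℝ) ^ κ)^2 := by
      intro ω
      rw [clusterHalfEdges_eq hper.toPAT.τ_one hper.toPAT.τ_mono ω hn,
        clusterY_eq b hper.toPAT.τ_one hper.toPAT.τ_mono ω hn,
        show ((pHd π cut n ω : ℝ) - (1 - p)/(b + p) * pYd π cut b n ω)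
          = pMd b p π cut n ω from rfl, div_pow]
    rw [integral_congr_ae (ae_of_all _ hcongr), integral_div, hu]
  have hInn : ∀ n : ℕ, 0 ≤ ∫ ω, (((clusterHalfEdges τ π cut 1 (τ n ω) ω : ℝ)
          - (1 - p) / (b + p) * clusterY b τ π cut 1 (τ n ω) ω) / (n : ℝ) ^ κ) ^ 2 ∂P :=
    fun n => integral_nonneg (fun ω => sq_nonneg _)
  have hgt : Tendsto (fun n : ℕ =>
      (u 1) * (n:ℝ)^(-(2*κ)) + (C2*K0) * (n:ℝ)^(q - 2*κ)) atTop (𝓝 0) := by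
    have l1 : Tendsto (fun n : ℕ => ((n:ℝ))^(-(2*κ))) atTop (𝓝 0) :=
      (tendsto_rpow_neg_atTop (by nlinarith)).comp tendsto_natCast_atTop_atTop
    have l2 : Tendsto (fun n : ℕ => ((n:ℝ))^(q - 2*κ)) atTop (𝓝 0) := by
      have heq : (fun n : ℕ => ((n:ℝ))^(q - 2*κ)) = fun n : ℕ => ((n:ℝ))^(-(2*κ - q)) := by
        funext n; congr 1; ring
      rw [heq]
      exact (tendsto_rpow_neg_atTop (by linarith)).comp tendsto_natCast_atTop_atTop
    have := (l1.const_mul (u 1)).add (l2.const_mul (C2*K0))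
    simpa using this
  apply tendsto_of_tendsto_of_tendsto_of_le_of_le' tendsto_const_nhds hgt
  · exact Eventually.of_forall hInn
  · filter_upwards [eventually_ge_atTop 2] with n hn2
    have hn1 : 1 ≤ n := by omega
    rw [hIeq n hn1]
    have hnR : (2:ℝ) ≤ (n:ℝ) := by exact_mod_cast hn2
    have hnpos : (0:ℝ) < (n:ℝ) := by linarith
    have hd2 : ((n:ℝ) ^ κ)^2 = (n:ℝ)^(2*κ) := by
      rw [← Real.rpow_natCast ((n:ℝ)^κ) 2, ← Real.rpow_mul hnpos.le]
      congr 1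
      push_cast
      ring
    have hdpos : (0:ℝ) < (n:ℝ)^(2*κ) := Real.rpow_pos_of_pos hnpos _
    rw [hd2]
    have hub' := hub n hn1
    have hexp_eq : Real.exp (q * Real.log n) = (n:ℝ)^q := by
      rw [Real.rpow_def_of_pos hnpos, mul_comm]
    rw [hexp_eq] at hub'
    refine le_trans ((div_le_div_iff_of_pos_right hdpos).mpr hub') ?_
    have heq2 : (u 1 + C2 * (K0*(n:ℝ)^q)) / (n:ℝ)^(2*κ)
        = u 1 * (n:ℝ)^(-(2*κ)) + (C2*K0) * (n:ℝ)^(q - 2*κ) := by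
      rw [Real.rpow_neg hnpos.le, Real.rpow_sub hnpos, add_div]
      ring
    rw [← heq2]
end
end

section
/- Let p∈(0,1), b≥0, κ = (b+p)/(b+1), and α > 0. Let Z_i (i∈ℕ) be the L² limits of the normalized cluster sizes |𝒞_{i,n}|/n^κ, so that Z_i =_d ε_i·β_i^κ·Z_1 with ε_1=1, ε_i Bernoulli(1−p) for i≥2, β_i Beta(1/(b+1), i−1)-distributed independent of ε_i, and Z_1 independent of (ε_i, β_i). Then Σ_{i=1}^∞ E[Z_i^α] < ∞ if and only if ακ > 1. -/
open MeasureTheory ProbabilityTheory Filter Topology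
open scoped ENNReal NNReal

noncomputable section

/-- The Beta(`r`,`s`) distribution on `(0,1)` (for `r, s > 0`). -/
def betaMeasure (r s : ℝ) : Measure ℝ :=
  MeasureTheory.volume.withDensity fun x =>
    ENNReal.ofReal ((Set.Ioo (0 : ℝ) 1).indicator
      (fun y => Real.Gamma (r + s) / (Real.Gamma r * Real.Gamma s)
        * y ^ (r - 1) * (1 - y) ^ (s - 1)) x)

lemma gamma_prod (x : ℝ) (hx : 0 < x) (n : ℕ) :
    Real.Gamma (x + n) = Real.Gamma x * ∏ j ∈ Finset.range n, (x + j) := by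
  induction n with
  | zero => simp
  | succ n ih =>
    have hne : (x + n : ℝ) ≠ 0 := by positivity
    have h1 : (x + (n + 1 : ℕ) : ℝ) = (x + n) + 1 := by push_cast; ring
    rw [h1, Real.Gamma_add_one hne, ih, Finset.prod_range_succ]
    ring

lemma beta_integral_Ioo (a : ℝ) (ha : 0 < a) (m : ℕ) :
    ∫ y in Set.Ioo (0:ℝ) 1, y ^ (a - 1) * (1 - y) ^ (m : ℝ)
      = m.factorial / ∏ j ∈ Finset.range (m + 1), (a + j) := by
  have h := Complex.betaIntegral_eval_nat_add_one_right (u := (a:ℂ)) (by simpa using ha) m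
  rw [Complex.betaIntegral] at h
  have hcongr : Set.EqOn (fun x : ℝ => (x:ℂ) ^ ((a:ℂ) - 1) * (1 - (x:ℂ)) ^ (((m:ℂ) + 1) - 1))
      (fun x : ℝ => ((x ^ (a - 1) * (1 - x) ^ (m : ℝ) : ℝ) : ℂ)) (Set.uIcc (0:ℝ) 1) := by
    intro x hx
    rw [Set.uIcc_of_le zero_le_one] at hx
    have hx0 : (0:ℝ) ≤ x := hx.1
    have hx1 : (0:ℝ) ≤ 1 - x := by linarith [hx.2]
    simp only
    rw [add_sub_cancel_right, Complex.ofReal_mul, Complex.ofReal_cpow hx0,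
      Complex.ofReal_cpow hx1]
    push_cast
    ring
  rw [intervalIntegral.integral_congr hcongr, intervalIntegral.integral_ofReal] at h
  have h2 : (∫ x in (0:ℝ)..1, x ^ (a - 1) * (1 - x) ^ (m : ℝ))
      = (m.factorial : ℝ) / ∏ j ∈ Finset.range (m + 1), (a + j) := by
    have := h
    rw [show ((m.factorial : ℂ) / ∏ j ∈ Finset.range (m + 1), ((a:ℂ) + (j:ℕ)))
        = (((m.factorial : ℝ) / ∏ j ∈ Finset.range (m + 1), (a + j) : ℝ) : ℂ) by push_cast; ring] at this
    exact_mod_cast this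
  rw [← h2, intervalIntegral.integral_of_le zero_le_one, integral_Ioc_eq_integral_Ioo]


lemma betaMeasure_ae_Ioo (r s : ℝ) : ∀ᵐ y ∂(_root_.betaMeasure r s), y ∈ Set.Ioo (0:ℝ) 1 := by
  rw [ae_iff]
  have hmeas : MeasurableSet {y : ℝ | ¬ y ∈ Set.Ioo (0:ℝ) 1} := measurableSet_Ioo.compl
  rw [_root_.betaMeasure, withDensity_apply _ hmeas]
  have h0 : ∀ᵐ y ∂(MeasureTheory.volume : Measure ℝ), y ∈ {y : ℝ | ¬ y ∈ Set.Ioo (0:ℝ) 1} →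
      ENNReal.ofReal ((Set.Ioo (0 : ℝ) 1).indicator
        (fun y => Real.Gamma (r + s) / (Real.Gamma r * Real.Gamma s)
          * y ^ (r - 1) * (1 - y) ^ (s - 1)) y) = (0 : ℝ≥0∞) := by
    refine ae_of_all _ fun y hy => ?_
    simp only [Set.mem_setOf_eq] at hy
    rw [Set.indicator_of_notMem hy, ENNReal.ofReal_zero]
  rw [setLIntegral_congr_fun_ae hmeas h0]
  simp

lemma betaMeasure_moment (r tt : ℝ) (hr : 0 < r) (ht : 0 < tt) (n : ℕ) (hn : 1 ≤ n) :
    ∫ y, y ^ tt ∂(_root_.betaMeasure r n) = ∏ j ∈ Finset.range n, ((r + j) / (r + tt + j)) := by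
  set c : ℝ := Real.Gamma (r + n) / (Real.Gamma r * Real.Gamma n) with hc
  set h : ℝ → ℝ := (Set.Ioo (0:ℝ) 1).indicator
      (fun y => c * y ^ (r - 1) * (1 - y) ^ ((n:ℝ) - 1)) with hh
  have hmeas : Measurable h := by
    apply Measurable.indicator _ measurableSet_Ioo
    exact ((measurable_const.mul (measurable_id.pow_const _)).mul
      ((measurable_const.sub measurable_id).pow_const _))
  have hnonneg : ∀ y, 0 ≤ h y := by
    intro y
    apply Set.indicator_nonneg
    intro y hy
    have h1 : (0:ℝ) < y := hy.1
    have h2 : (0:ℝ) < 1 - y := by linarith [hy.2]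
    have hcpos : 0 < c := by
      apply div_pos (Real.Gamma_pos_of_pos (by positivity))
      exact mul_pos (Real.Gamma_pos_of_pos hr) (Real.Gamma_pos_of_pos (by exact_mod_cast hn))
    positivity
  have hwd : _root_.betaMeasure r n
      = MeasureTheory.volume.withDensity fun y => ((Real.toNNReal (h y) : ℝ≥0) : ℝ≥0∞) := rfl
  rw [hwd, integral_withDensity_eq_integral_smul hmeas.real_toNNReal]
  have hpt : (fun y => (Real.toNNReal (h y)) • (y ^ tt))
      = fun y => (Set.Ioo (0:ℝ) 1).indicator
          (fun y => (c * y ^ (r - 1) * (1 - y) ^ ((n:ℝ) - 1)) * y ^ tt) y := by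
    funext y
    rw [NNReal.smul_def, smul_eq_mul, Real.coe_toNNReal _ (hnonneg y), hh]
    by_cases hy : y ∈ Set.Ioo (0:ℝ) 1
    · rw [Set.indicator_of_mem hy, Set.indicator_of_mem hy]
    · rw [Set.indicator_of_notMem hy, Set.indicator_of_notMem hy, zero_mul]
  rw [hpt, integral_indicator measurableSet_Ioo]
  have hcongr : Set.EqOn
      (fun y => (c * y ^ (r - 1) * (1 - y) ^ ((n:ℝ) - 1)) * y ^ tt)
      (fun y => c * (y ^ ((r + tt) - 1) * (1 - y) ^ (((n - 1 : ℕ) : ℝ)))) (Set.Ioo (0:ℝ) 1) := by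
    intro y hy
    have h1 : (0:ℝ) < y := hy.1
    simp only
    rw [show ((n - 1 : ℕ) : ℝ) = (n:ℝ) - 1 by
      push_cast [Nat.cast_sub hn]; ring]
    rw [show (r + tt) - 1 = (r - 1) + tt by ring, Real.rpow_add h1]
    ring
  rw [setIntegral_congr_fun measurableSet_Ioo hcongr, integral_const_mul,
    beta_integral_Ioo (r + tt) (by positivity) (n - 1), Nat.sub_add_cancel hn]
  -- now algebra with c
  have hGn : Real.Gamma (n : ℝ) = ((n - 1).factorial : ℝ) := by
    have : ((n : ℝ)) = ((n - 1 : ℕ) : ℝ) + 1 := by push_cast [Nat.cast_sub hn]; ring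
    rw [this, Real.Gamma_nat_eq_factorial]
  have hGrn : Real.Gamma (r + n) = Real.Gamma r * ∏ j ∈ Finset.range n, (r + j) :=
    gamma_prod r hr n
  have hfac : ((n - 1).factorial : ℝ) ≠ 0 := by positivity
  have hGr : Real.Gamma r ≠ 0 := (Real.Gamma_pos_of_pos hr).ne'
  have hprod : (∏ j ∈ Finset.range n, (r + tt + (j:ℝ))) ≠ 0 := by
    apply Finset.prod_ne_zero_iff.mpr
    intro j _
    positivity
  rw [hc, hGn, hGrn, Finset.prod_div_distrib]
  field_simp

lemma M_pos (r tt : ℝ) (hr : 0 < r) (ht : 0 < tt) (n : ℕ) :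
    0 < ∏ j ∈ Finset.range n, ((r + j) / (r + tt + j)) := by
  apply Finset.prod_pos
  intro j _
  positivity

lemma summable_M_iff (r tt : ℝ) (hr : 0 < r) (ht : 0 < tt) :
    Summable (fun n : ℕ => ∏ j ∈ Finset.range n, ((r + j) / (r + tt + j))) ↔ 1 < tt := by
  set M : ℕ → ℝ := fun n => ∏ j ∈ Finset.range n, ((r + j) / (r + tt + j)) with hM
  have hMsucc : ∀ n : ℕ, M (n + 1) = M n * ((r + n) / (r + tt + n)) := fun n =>
    Finset.prod_range_succ _ n
  constructor
  · intro hs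
    by_contra hle
    push_neg at hle
    have hlow : ∀ n : ℕ, r / (r + n) ≤ M n := by
      intro n
      induction n with
      | zero => simp [hM, div_self hr.ne']
      | succ n ih =>
        have h1 : (r + (n:ℝ)) / (r + tt + n) ≥ (r + n) / (r + 1 + n) := by
          apply div_le_div_of_nonneg_left (by positivity) (by positivity)
          linarith
        have h2 : r / (r + (n:ℝ)) * ((r + n) / (r + 1 + n)) = r / (r + ((n:ℕ)+1:ℝ)) := by
          rw [div_mul_div_comm]
          rw [mul_comm r (r + (n:ℝ))]
          rw [mul_div_mul_left _ _ (by positivity : (r + (n:ℝ)) ≠ 0)]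
          push_cast; ring_nf
        calc r / (r + ((n+1:ℕ):ℝ)) = r / (r + (n:ℝ)) * ((r + n) / (r + 1 + n)) := by
              rw [h2]; push_cast; ring_nf
          _ ≤ M n * ((r + n) / (r + tt + n)) := by
              apply mul_le_mul ih h1 (by positivity)
              exact le_trans (by positivity) ih
          _ = M (n + 1) := (hMsucc n).symm
    have h1 : Summable (fun n : ℕ => r / (r + n)) :=
      hs.of_nonneg_of_le (fun n => by positivity) hlow
    have h2 : Summable (fun n : ℕ => ((r+1)/r) * (r / (r + n))) := h1.mul_left _
    have h3 : Summable (fun n : ℕ => (n : ℝ)⁻¹) := by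
      refine h2.of_nonneg_of_le (fun n => by positivity) ?_
      intro n
      cases n with
      | zero => simp; positivity
      | succ n =>
        have hx : (0:ℝ) < ((n:ℝ) + 1) := by positivity
        have hr1 : ((r+1)/r) * (r / (r + ((n:ℝ)+1))) = (r+1)/(r + ((n:ℝ)+1)) := by
          field_simp
        push_cast
        rw [hr1, inv_eq_one_div, div_le_div_iff₀ hx (by positivity)]
        nlinarith
    exact Real.not_summable_natCast_inv h3
  · intro ht1
    have hc : (0:ℝ) < tt - 1 := by linarith
    have hMpos : ∀ n, 0 < M n := fun n => M_pos r tt hr ht n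
    have key : ∀ n : ℕ, ∑ k ∈ Finset.range n, M k
        = (r + tt - 1) / (tt - 1) - M n * (r + tt - 1 + n) / (tt - 1) := by
      intro n
      induction n with
      | zero => simp [hM]
      | succ n ih =>
        rw [Finset.sum_range_succ, ih, hMsucc n]
        have hden : (r + tt + (n:ℝ)) ≠ 0 := by positivity
        push_cast
        field_simp
        ring
    apply summable_of_sum_range_le (c := (r + tt - 1) / (tt - 1)) (fun n => (hMpos n).le)
    intro n
    rw [key n]
    have : 0 ≤ M n * (r + tt - 1 + n) / (tt - 1) := by
      apply div_nonneg _ hc.le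
      apply mul_nonneg (hMpos n).le
      have : (0:ℝ) ≤ (n:ℝ) := Nat.cast_nonneg n
      linarith
    linarith

lemma integrable_dirac_meas {f : ℝ → ℝ} (hf : Measurable f) (a : ℝ) :
    Integrable f (Measure.dirac a) := by
  refine ⟨hf.aestronglyMeasurable, ?_⟩
  rw [HasFiniteIntegral, lintegral_dirac]
  exact ENNReal.coe_lt_top

lemma eps_moment (p α : ℝ) (hp0 : 0 < p) (hp1 : p < 1) (hα : 0 < α) :
    ∫ x, x ^ α ∂(ENNReal.ofReal (1 - p) • Measure.dirac (1:ℝ)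
      + ENNReal.ofReal p • Measure.dirac (0:ℝ)) = 1 - p := by
  have hm : Measurable fun x : ℝ => x ^ α := measurable_id.pow_const α
  rw [integral_add_measure
      ((integrable_dirac_meas hm 1).smul_measure ENNReal.ofReal_ne_top)
      ((integrable_dirac_meas hm 0).smul_measure ENNReal.ofReal_ne_top),
    integral_smul_measure, integral_smul_measure, integral_dirac, integral_dirac,
    ENNReal.toReal_ofReal (by linarith), ENNReal.toReal_ofReal hp0.le,
    Real.one_rpow, Real.zero_rpow hα.ne']
  simp

lemma eps_ae_nonneg (p : ℝ) :
    ∀ᵐ x ∂(ENNReal.ofReal (1 - p) • Measure.dirac (1:ℝ)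
      + ENNReal.ofReal p • Measure.dirac (0:ℝ)), 0 ≤ x := by
  rw [ae_iff]
  have hs : MeasurableSet {x : ℝ | ¬ 0 ≤ x} := (measurableSet_Ici (a := (0:ℝ))).compl
  simp only [Measure.add_apply, Measure.smul_apply, smul_eq_mul]
  rw [Measure.dirac_apply' _ hs, Measure.dirac_apply' _ hs,
    Set.indicator_of_notMem (by simp), Set.indicator_of_notMem (by simp)]
  simp

/-- **Summability criterion for the moments of the limiting cluster sizes.**
Let `κ = (b+p)/(b+1)`, `α > 0`, and let `Z_i`, `i ≥ 1`, be nonnegative random variables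
such that `Z_i` is distributed as `ε_i β_i^κ Z₁`, with `ε₁ = 1`, `ε_i` Bernoulli(`1-p`) for
`i ≥ 2`, `β_i` Beta(`1/(b+1)`, `i-1`)-distributed and `ε_i, β_i, Z₁` independent
(Beta(`r`,`0`) being the point mass at `1`), where `Z₁` has a finite strictly positive
`α`-th moment.  Then `Σ_{i=1}^∞ E[Z_i^α] < ∞` if and only if `ακ > 1`. -/
theorem limit_cluster_sizes_moment_summability
    {Ω : Type*} [MeasurableSpace Ω] (P : Measure Ω) [IsProbabilityMeasure P]
    (b p α : ℝ) (hb : 0 ≤ b) (hp : p ∈ Set.Ioo (0 : ℝ) 1) (hα : 0 < α)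
    (κ : ℝ) (hκ : κ = (b + p) / (b + 1))
    (Z : ℕ → Ω → ℝ)
    (hZmeas : ∀ i, 1 ≤ i → Measurable (Z i))
    (hZnonneg : ∀ i, 1 ≤ i → ∀ ω, 0 ≤ Z i ω)
    -- `Z_i =_d ε_i · β_i^κ · Z₁` with `ε_i, β_i, Z₁` independent
    (hZlaw : ∀ i, 1 ≤ i →
      P.map (Z i)
        = Measure.map (fun q : ℝ × ℝ × ℝ => q.1 * q.2.1 ^ κ * q.2.2)
            ((if i = 1 then Measure.dirac (1 : ℝ)
                else ENNReal.ofReal (1 - p) • Measure.dirac (1 : ℝ)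
                  + ENNReal.ofReal p • Measure.dirac (0 : ℝ)).prod
              ((if i = 1 then Measure.dirac (1 : ℝ)
                  else _root_.betaMeasure (1 / (b + 1)) ((i : ℝ) - 1)).prod
                (P.map (Z 1)))))
    -- `Z₁` has a finite, strictly positive `α`-th moment
    (hZ1int : Integrable (fun ω => Z 1 ω ^ α) P)
    (hZ1pos : 0 < ∫ ω, Z 1 ω ^ α ∂P) :
    Summable (fun i : ℕ => ∫ ω, Z (i + 1) ω ^ α ∂P) ↔ 1 < α * κ := by
  obtain ⟨hp0, hp1⟩ := hp
  have hb1 : (0:ℝ) < b + 1 := by linarith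
  set r : ℝ := 1 / (b + 1) with hrdef
  have hr : 0 < r := by positivity
  have hκpos : 0 < κ := by rw [hκ]; exact div_pos (by linarith) hb1
  set tt : ℝ := α * κ with httdef
  have htt : 0 < tt := mul_pos hα hκpos
  set C : ℝ := ∫ ω, Z 1 ω ^ α ∂P with hCdef
  have hm1 : Measurable (Z 1) := hZmeas 1 le_rfl
  haveI : IsProbabilityMeasure (P.map (Z 1)) := Measure.isProbabilityMeasure_map hm1.aemeasurable
  have hpowm : ∀ c : ℝ, Measurable fun x : ℝ => x ^ c := fun c => measurable_id.pow_const c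
  have hZ1map : ∫ z, z ^ α ∂(P.map (Z 1)) = C := by
    rw [integral_map hm1.aemeasurable (hpowm α).aestronglyMeasurable]
  have hZ1ae : ∀ᵐ z ∂(P.map (Z 1)), 0 ≤ z := by
    rw [ae_map_iff hm1.aemeasurable (measurableSet_Ici (a := (0:ℝ)))]
    exact ae_of_all _ (hZnonneg 1 le_rfl)
  have hF : Measurable fun q : ℝ × ℝ × ℝ => q.1 * q.2.1 ^ κ * q.2.2 :=
    (measurable_fst.mul ((measurable_fst.comp measurable_snd).pow_const κ)).mul
      (measurable_snd.comp measurable_snd)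
  have hCpos : 0 < C := hZ1pos
  have hmom : ∀ i : ℕ, 2 ≤ i → ∫ ω, Z i ω ^ α ∂P
      = ((1 - p) * C) * ∏ j ∈ Finset.range (i - 1), ((r + j) / (r + tt + j)) := by
    intro i hi
    have hi1 : 1 ≤ i := by omega
    have hne : i ≠ 1 := by omega
    have hmi : Measurable (Z i) := hZmeas i hi1
    have hcast : ((i:ℝ) - 1) = ((i - 1 : ℕ) : ℝ) := by push_cast [Nat.cast_sub hi1]; ring
    have step1 : ∫ ω, Z i ω ^ α ∂P = ∫ x, x ^ α ∂(P.map (Z i)) :=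
      (integral_map hmi.aemeasurable (hpowm α).aestronglyMeasurable).symm
    rw [step1, hZlaw i hi1, if_neg hne, if_neg hne, hcast,
      integral_map hF.aemeasurable (hpowm α).aestronglyMeasurable]
    set με : Measure ℝ := ENNReal.ofReal (1 - p) • Measure.dirac (1:ℝ)
        + ENNReal.ofReal p • Measure.dirac (0:ℝ) with hμεdef
    set μβ : Measure ℝ := _root_.betaMeasure (1/(b+1)) (((i - 1 : ℕ) : ℝ)) with hμβdef
    set μZ : Measure ℝ := P.map (Z 1) with hμZdef
    haveI : SFinite μβ := by rw [hμβdef]; unfold _root_.betaMeasure; infer_instance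
    have hae23 : ∀ᵐ q ∂(μβ.prod μZ), 0 ≤ q.1 ∧ 0 ≤ q.2 := by
      have hms : MeasurableSet {q : ℝ × ℝ | 0 ≤ q.1 ∧ 0 ≤ q.2} :=
        (measurable_fst (measurableSet_Ici (a := (0:ℝ)))).inter
          (measurable_snd (measurableSet_Ici (a := (0:ℝ))))
      rw [Measure.ae_prod_iff_ae_ae hms]
      refine ((betaMeasure_ae_Ioo _ _).mono fun y hy => ?_)
      exact hZ1ae.mono fun z hz => ⟨hy.1.le, hz⟩
    have haeall : ∀ᵐ q ∂(με.prod (μβ.prod μZ)), 0 ≤ q.1 ∧ (0 ≤ q.2.1 ∧ 0 ≤ q.2.2) := by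
      have hms : MeasurableSet {q : ℝ × ℝ × ℝ | 0 ≤ q.1 ∧ (0 ≤ q.2.1 ∧ 0 ≤ q.2.2)} :=
        (measurable_fst (measurableSet_Ici (a := (0:ℝ)))).inter
          (((measurable_fst.comp measurable_snd) (measurableSet_Ici (a := (0:ℝ)))).inter
            ((measurable_snd.comp measurable_snd) (measurableSet_Ici (a := (0:ℝ)))))
      rw [Measure.ae_prod_iff_ae_ae hms]
      refine (eps_ae_nonneg p).mono fun x hx => ?_
      exact hae23.mono fun q hq => ⟨hx, hq⟩
    have haeeq : (fun q : ℝ × ℝ × ℝ => (q.1 * q.2.1 ^ κ * q.2.2) ^ α)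
        =ᵐ[με.prod (μβ.prod μZ)]
        (fun q : ℝ × ℝ × ℝ => q.1 ^ α * (q.2.1 ^ tt * q.2.2 ^ α)) := by
      refine haeall.mono fun q hq => ?_
      obtain ⟨hx, hy, hz⟩ := hq
      show (q.1 * q.2.1 ^ κ * q.2.2) ^ α = q.1 ^ α * (q.2.1 ^ tt * q.2.2 ^ α)
      rw [Real.mul_rpow (mul_nonneg hx (Real.rpow_nonneg hy κ)) hz,
        Real.mul_rpow hx (Real.rpow_nonneg hy κ), ← Real.rpow_mul hy, mul_comm κ α,
        httdef]
      ring
    rw [integral_congr_ae haeeq]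
    have hsplit : ∫ q : ℝ × ℝ × ℝ, q.1 ^ α * (q.2.1 ^ tt * q.2.2 ^ α)
          ∂(με.prod (μβ.prod μZ))
        = (∫ x, x ^ α ∂με) * ((∫ y, y ^ tt ∂μβ) * (∫ z, z ^ α ∂μZ)) := by
      rw [integral_prod_mul (fun x : ℝ => x ^ α)
        (fun w : ℝ × ℝ => w.1 ^ tt * w.2 ^ α),
        integral_prod_mul (fun y : ℝ => y ^ tt) (fun z : ℝ => z ^ α)]
    rw [hsplit, hμεdef, eps_moment p α hp0 hp1 hα, hμβdef,
      betaMeasure_moment r tt hr htt (i - 1) (by omega), hμZdef, hZ1map]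
    ring
  have hMdef : ∀ n : ℕ, (∏ j ∈ Finset.range n, ((r + (j:ℝ)) / (r + tt + j))) =
      (fun n : ℕ => ∏ j ∈ Finset.range n, ((r + (j:ℝ)) / (r + tt + j))) n := fun n => rfl
  have hne0 : ((1 - p) * C) ≠ 0 := (mul_pos (by linarith : (0:ℝ) < 1 - p) hCpos).ne'
  calc Summable (fun i : ℕ => ∫ ω, Z (i + 1) ω ^ α ∂P)
      ↔ Summable (fun i : ℕ => ∫ ω, Z (i + 1 + 1) ω ^ α ∂P) :=
        (summable_nat_add_iff (f := fun i : ℕ => ∫ ω, Z (i + 1) ω ^ α ∂P) 1).symm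
    _ ↔ Summable (fun i : ℕ => ((1 - p) * C)
          * ∏ j ∈ Finset.range (i + 1), ((r + (j:ℝ)) / (r + tt + j))) := by
        refine summable_congr fun i => ?_
        rw [hmom (i + 1 + 1) (by omega)]
        norm_num
    _ ↔ Summable (fun i : ℕ =>
          ∏ j ∈ Finset.range (i + 1), ((r + (j:ℝ)) / (r + tt + j))) :=
        summable_mul_left_iff hne0
    _ ↔ Summable (fun n : ℕ => ∏ j ∈ Finset.range n, ((r + (j:ℝ)) / (r + tt + j))) :=
        summable_nat_add_iff (f := fun n : ℕ => ∏ j ∈ Finset.range n,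
          ((r + (j:ℝ)) / (r + tt + j))) 1
    _ ↔ 1 < tt := summable_M_iff r tt hr htt
    _ ↔ 1 < α * κ := by rw [httdef]
end
end
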